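/- arXiv:2108.04905 — 4 statements merged into one kernel-verified Lean document; each statement's English description precedes it below -/
import Mathlib

section
/- Let T > 0, N ∈ ℕ and H : [0,T]×ℝ^N×ℝ^N → ℝ. Then condition (A) holds if and only if condition (B) holds. -/
open MeasureTheory Filter Set Topology
open scoped RealInnerProductSpace

noncomputable section

/-- `ℝ^n` with the Euclidean norm. -/
abbrev Euc (n : ℕ) : Type := EuclideanSpace ℝ (Fin n)

/-- (H1): continuity in all variables on `[0,T] × F × F`. -/
def CondH1 (T : ℝ) {F : Type} [NormedAddCommGroup F] [NormedSpace ℝ F]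
    (H : ℝ → F → F → ℝ) : Prop :=
  ContinuousOn (fun q : ℝ × F × F => H q.1 q.2.1 q.2.2) (Icc 0 T ×ˢ (univ : Set (F × F)))

/-- (H2): convexity in the gradient variable. -/
def CondH2 (T : ℝ) {F : Type} [NormedAddCommGroup F] [NormedSpace ℝ F]
    (H : ℝ → F → F → ℝ) : Prop :=
  ∀ t ∈ Icc (0:ℝ) T, ∀ x : F, ConvexOn ℝ univ (H t x)

/-- (H3): local Lipschitz continuity in the gradient variable. -/
def CondH3 (T : ℝ) {F : Type} [NormedAddCommGroup F] [NormedSpace ℝ F]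
    (H : ℝ → F → F → ℝ) : Prop :=
  ∀ R : ℝ, 0 ≤ R → ∃ C : ℝ, 0 ≤ C ∧ ∀ t ∈ Icc (0:ℝ) T, ∀ x : F, ‖x‖ ≤ R →
    ∀ p q : F, |H t x p - H t x q| ≤ C * ‖p - q‖

/-- (H4): sublinear Lipschitz bound in the gradient variable. -/
def CondH4 (T : ℝ) {F : Type} [NormedAddCommGroup F] [NormedSpace ℝ F]
    (H : ℝ → F → F → ℝ) : Prop :=
  ∃ c : ℝ → ℝ, IntegrableOn c (Icc 0 T) ∧ (∀ t, 0 ≤ c t) ∧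
    ∀ᵐ t ∂(volume.restrict (Icc (0:ℝ) T)), ∀ x p q : F,
      |H t x p - H t x q| ≤ c t * (1 + ‖x‖) * ‖p - q‖

/-- (H5): local Lipschitz continuity in the state variable. -/
def CondH5 (T : ℝ) {F : Type} [NormedAddCommGroup F] [NormedSpace ℝ F]
    (H : ℝ → F → F → ℝ) : Prop :=
  ∀ R : ℝ, 0 ≤ R → ∃ k : ℝ → ℝ, IntegrableOn k (Icc 0 T) ∧ (∀ t, 0 ≤ k t) ∧
    ∀ᵐ t ∂(volume.restrict (Icc (0:ℝ) T)), ∀ x y p : F, ‖x‖ ≤ R → ‖y‖ ≤ R →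
      |H t x p - H t y p| ≤ k t * (1 + ‖p‖) * ‖x - y‖

/-- Legendre–Fenchel conjugate of `H` in its gradient variable. -/
def LFconj {n : ℕ} (H : ℝ → Euc n → Euc n → ℝ) (t : ℝ) (x v : Euc n) : EReal :=
  ⨆ p : Euc n, ((⟪v, p⟫ - H t x p : ℝ) : EReal)

/-- Effective domain of an extended-real-valued function. -/
def edom {α : Type*} (φ : α → EReal) : Set α := { z | φ z ≠ ⊤ ∧ φ z ≠ ⊥ }

/-- Condition (A). -/
def CondA (T : ℝ) {n : ℕ} (H : ℝ → Euc n → Euc n → ℝ) : Prop :=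
  CondH1 T H ∧ CondH2 T H ∧ CondH3 T H ∧ CondH4 T H ∧ CondH5 T H ∧
  ∃ lam : ℝ → Euc n → ℝ,
    ContinuousOn (fun q : ℝ × Euc n => lam q.1 q.2) (Icc 0 T ×ˢ (univ : Set (Euc n))) ∧
    (∀ t ∈ Icc (0:ℝ) T, ∀ x : Euc n, 0 ≤ lam t x) ∧
    (∀ t ∈ Icc (0:ℝ) T, ∀ x : Euc n, ∀ v ∈ edom (LFconj H t x),
      ‖v‖ ≤ lam t x ∧ |(LFconj H t x v).toReal| ≤ lam t x) ∧
    (∀ R : ℝ, 0 ≤ R → ∃ ζ : ℝ → ℝ, IntegrableOn ζ (Icc 0 T) ∧ (∀ t, 0 ≤ ζ t) ∧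
      ∀ᵐ t ∂(volume.restrict (Icc (0:ℝ) T)), ∀ x y : Euc n, ‖x‖ ≤ R → ‖y‖ ≤ R →
        |lam t x - lam t y| ≤ ζ t * ‖x - y‖) ∧
    (∃ θ : ℝ → ℝ, IntegrableOn θ (Icc 0 T) ∧ (∀ t, 0 ≤ θ t) ∧
      ∀ᵐ t ∂(volume.restrict (Icc (0:ℝ) T)), ∀ x : Euc n, lam t x ≤ θ t * (1 + ‖x‖))

/-- Condition (B): existence of a positively homogeneous extension `H̄`. -/
def CondB (T : ℝ) {n : ℕ} (H : ℝ → Euc n → Euc n → ℝ) : Prop :=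
  ∃ Hb : ℝ → Euc n × ℝ → Euc n × ℝ → ℝ,
    (∀ t ∈ Icc (0:ℝ) T, ∀ X P : Euc n × ℝ, ∀ s : ℝ, 0 ≤ s →
      Hb t X (s • P) = s * Hb t X P) ∧
    (∀ t ∈ Icc (0:ℝ) T, ∀ x : Euc n, ∀ r : ℝ, ∀ p : Euc n,
      Hb t (x, r) (p, -1) = H t x p) ∧
    CondH1 T Hb ∧ CondH2 T Hb ∧ CondH3 T Hb ∧ CondH4 T Hb ∧ CondH5 T Hb

/-- Convexity for extended-real-valued functions. -/
def EConvex {F : Type} [AddCommMonoid F] [Module ℝ F] (φ : F → EReal) : Prop :=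
  ∀ v w : F, ∀ a b : ℝ, 0 ≤ a → 0 ≤ b → a + b = 1 →
    φ (a • v + b • w) ≤ (a : EReal) * φ v + (b : EReal) * φ w

/-- Properness for extended-real-valued functions. -/
def EProper {F : Type*} (φ : F → EReal) : Prop := (∀ v, φ v ≠ ⊥) ∧ ∃ v, φ v ≠ ⊤

/-- (L1): lower semicontinuity in all variables. -/
def CondL1 (T : ℝ) {n : ℕ} (L : ℝ → Euc n → Euc n → EReal) : Prop :=
  LowerSemicontinuousOn (fun q : ℝ × Euc n × Euc n => L q.1 q.2.1 q.2.2)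
    (Icc 0 T ×ˢ (univ : Set (Euc n × Euc n)))

/-- (L2): convexity and properness in the velocity variable. -/
def CondL2 (T : ℝ) {n : ℕ} (L : ℝ → Euc n → Euc n → EReal) : Prop :=
  ∀ t ∈ Icc (0:ℝ) T, ∀ x : Euc n, EConvex (L t x) ∧ EProper (L t x)

/-- (L3): lower semicontinuity is attained along sequences. -/
def CondL3 (T : ℝ) {n : ℕ} (L : ℝ → Euc n → Euc n → EReal) : Prop :=
  ∀ t ∈ Icc (0:ℝ) T, ∀ x v : Euc n, ∀ tm : ℕ → ℝ, ∀ xm : ℕ → Euc n,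
    (∀ m, tm m ∈ Icc (0:ℝ) T) →
    Tendsto (fun m => ((tm m, xm m) : ℝ × Euc n)) atTop (nhds (t, x)) →
    ∃ vm : ℕ → Euc n, Tendsto vm atTop (nhds v) ∧
      Tendsto (fun m => L (tm m) (xm m) (vm m)) atTop (nhds (L t x v))

/-- (L4): locally bounded effective domains. -/
def CondL4 (T : ℝ) {n : ℕ} (L : ℝ → Euc n → Euc n → EReal) : Prop :=
  ∀ R : ℝ, 0 ≤ R → ∃ C : ℝ, 0 ≤ C ∧ ∀ t ∈ Icc (0:ℝ) T, ∀ x : Euc n, ‖x‖ ≤ R →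
    ∀ v : Euc n, C < ‖v‖ → L t x v = ⊤

/-- (L5): sublinear bound on effective domains. -/
def CondL5 (T : ℝ) {n : ℕ} (L : ℝ → Euc n → Euc n → EReal) : Prop :=
  ∃ c : ℝ → ℝ, IntegrableOn c (Icc 0 T) ∧ (∀ t, 0 ≤ c t) ∧
    ∀ᵐ t ∂(volume.restrict (Icc (0:ℝ) T)), ∀ x v : Euc n,
      c t * (1 + ‖x‖) < ‖v‖ → L t x v = ⊤

/-- (L6): lower Lipschitz-type continuity in the state variable. -/
def CondL6 (T : ℝ) {n : ℕ} (L : ℝ → Euc n → Euc n → EReal) : Prop :=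
  ∀ R : ℝ, 0 ≤ R → ∃ k : ℝ → ℝ, IntegrableOn k (Icc 0 T) ∧ (∀ t, 0 ≤ k t) ∧
    ∀ᵐ t ∂(volume.restrict (Icc (0:ℝ) T)), ∀ x y : Euc n, ‖x‖ ≤ R → ‖y‖ ≤ R →
      ∀ v ∈ edom (L t x), ∃ w ∈ edom (L t y),
        ‖w - v‖ ≤ k t * ‖y - x‖ ∧ L t y w ≤ L t x v + ((k t * ‖y - x‖ : ℝ) : EReal)

/-- The set-valued map `Q(t,x) = {(v,η) : (v,-η) ∈ epi L(t,x,·)}`. -/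
def Qmap {n : ℕ} (L : ℝ → Euc n → Euc n → EReal) (t : ℝ) (x : Euc n) :
    Set (Euc n × ℝ) :=
  { ve | L t x ve.1 ≤ ((-ve.2 : ℝ) : EReal) }

/-- (Q6): Lipschitz-type continuity of `Q` in the state variable. -/
def CondQ6 (T : ℝ) {n : ℕ} (L : ℝ → Euc n → Euc n → EReal) : Prop :=
  ∀ R : ℝ, 0 ≤ R → ∃ k : ℝ → ℝ, IntegrableOn k (Icc 0 T) ∧ (∀ t, 0 ≤ k t) ∧
    ∀ᵐ t ∂(volume.restrict (Icc (0:ℝ) T)), ∀ x y : Euc n, ‖x‖ ≤ R → ‖y‖ ≤ R →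
      ∀ w ∈ Qmap L t x, ∃ z ∈ Qmap L t y,
        ‖w.1 - z.1‖ ≤ k t * ‖x - y‖ ∧ |w.2 - z.2| ≤ k t * ‖x - y‖

/-- The closed unit ball of `ℝ^n`. -/
def unitBall (n : ℕ) : Set (Euc n) := Metric.closedBall 0 1

/-- `(A,f,l)` is a representation of the Hamiltonian `H`. -/
def IsRepresentation (T : ℝ) {n : ℕ} (H : ℝ → Euc n → Euc n → ℝ)
    (A : Set (Euc (n+1))) (f : ℝ → Euc n → Euc (n+1) → Euc n)
    (l : ℝ → Euc n → Euc (n+1) → ℝ) : Prop :=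
  ∀ t ∈ Icc (0:ℝ) T, ∀ x p : Euc n,
    IsLUB { r : ℝ | ∃ a ∈ A, r = ⟪p, f t x a⟫ - l t x a } (H t x p)

/-- (R1): continuity of the representation data. -/
def CondR1 (T : ℝ) {n : ℕ} (f : ℝ → Euc n → Euc (n+1) → Euc n)
    (l : ℝ → Euc n → Euc (n+1) → ℝ) : Prop :=
  ContinuousOn (fun q : ℝ × Euc n × Euc (n+1) => f q.1 q.2.1 q.2.2)
    (Icc 0 T ×ˢ ((univ : Set (Euc n)) ×ˢ unitBall (n+1))) ∧
  ContinuousOn (fun q : ℝ × Euc n × Euc (n+1) => l q.1 q.2.1 q.2.2)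
    (Icc 0 T ×ˢ ((univ : Set (Euc n)) ×ˢ unitBall (n+1)))

/-- (R2): local Lipschitz continuity of the representation data in the state variable. -/
def CondR2 (T : ℝ) {n : ℕ} (f : ℝ → Euc n → Euc (n+1) → Euc n)
    (l : ℝ → Euc n → Euc (n+1) → ℝ) : Prop :=
  ∀ R : ℝ, 0 ≤ R → ∃ K : ℝ → ℝ, IntegrableOn K (Icc 0 T) ∧ (∀ t, 0 ≤ K t) ∧
    ∀ᵐ t ∂(volume.restrict (Icc (0:ℝ) T)), ∀ x y : Euc n, ∀ a ∈ unitBall (n+1),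
      ‖x‖ ≤ R → ‖y‖ ≤ R →
      ‖f t x a - f t y a‖ + |l t x a - l t y a| ≤ K t * ‖x - y‖

/-- (R3): sublinear growth of the representation data. -/
def CondR3 (T : ℝ) {n : ℕ} (f : ℝ → Euc n → Euc (n+1) → Euc n)
    (l : ℝ → Euc n → Euc (n+1) → ℝ) : Prop :=
  ∃ C : ℝ → ℝ, IntegrableOn C (Icc 0 T) ∧ (∀ t, 0 ≤ C t) ∧
    ∀ᵐ t ∂(volume.restrict (Icc (0:ℝ) T)), ∀ x : Euc n, ∀ a ∈ unitBall (n+1),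
      ‖f t x a‖ + |l t x a| ≤ C t * (1 + ‖x‖)

/-- Absolute continuity of `x` on `[a,b]`, with a.e. derivative `x'`. -/
def AbsCont {F : Type} [NormedAddCommGroup F] [NormedSpace ℝ F]
    (x x' : ℝ → F) (a b : ℝ) : Prop :=
  IntegrableOn x' (Icc a b) ∧
  (∀ᵐ t ∂(volume.restrict (Icc a b)), HasDerivWithinAt x (x' t) (Icc a b) t) ∧
  ∀ t ∈ Icc a b, x t = x a + ∫ s in a..t, x' s

-- The value function of the calculus of variations problem with data `L`, `g`.
open Classical in
def valueFun {n : ℕ} (T : ℝ) (L : ℝ → Euc n → Euc n → EReal) (g : Euc n → EReal)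
    (p : ℝ × Euc n) : EReal :=
  if p.1 = T then g p.2
  else if p.1 ∈ Ico (0:ℝ) T then
    sInf { r : EReal | ∃ x x' : ℝ → Euc n, ∃ ℓ : ℝ → ℝ,
      AbsCont x x' p.1 T ∧ x p.1 = p.2 ∧ IntegrableOn ℓ (Icc p.1 T) ∧
      (∀ᵐ t ∂(volume.restrict (Icc p.1 T)), L t (x t) (x' t) = ((ℓ t : ℝ) : EReal)) ∧
      r = g (x T) + ((∫ t in Icc p.1 T, ℓ t : ℝ) : EReal) }
  else ⊤

/-- The subderivative `dφ(z)(w) = liminf_{τ→0+, y→w} (φ(z+τy) − φ(z))/τ`. -/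
def subderivAt {F : Type} [AddCommGroup F] [Module ℝ F] [TopologicalSpace F]
    (φ : F → EReal) (z : F) (w : F) : EReal :=
  Filter.liminf (fun q : ℝ × F => (((q.1)⁻¹ : ℝ) : EReal) * (φ (z + q.1 • q.2) - φ z))
    ((nhdsWithin (0:ℝ) (Ioi 0)) ×ˢ nhds w)

/-- The subdifferential of `φ : [0,T]×ℝ^n → ℝ∪{±∞}` at `z`. -/
def subdiff {n : ℕ} (φ : ℝ × Euc n → EReal) (z : ℝ × Euc n) : Set (ℝ × Euc n) :=
  { p | ∀ w : ℝ × Euc n, ((w.1 * p.1 + ⟪w.2, p.2⟫ : ℝ) : EReal) ≤ subderivAt φ z w }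

/-- `U` is a lower semicontinuous solution of `-U_t + H(t,x,-U_x) = 0`, `U(T,·) = g`. -/
def LscSolution (T : ℝ) {n : ℕ} (H : ℝ → Euc n → Euc n → ℝ) (g : Euc n → EReal)
    (U : ℝ × Euc n → EReal) : Prop :=
  LowerSemicontinuous U ∧ (∀ p : ℝ × Euc n, U p ≠ ⊥) ∧
  (∀ p : ℝ × Euc n, p.1 ∉ Icc (0:ℝ) T → U p = ⊤) ∧
  (∀ x : Euc n, U (T, x) = g x) ∧
  ∀ t : ℝ, ∀ x : Euc n, (t, x) ∈ edom U → ∀ p ∈ subdiff U (t, x),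
    (t ∈ Ico (0:ℝ) T → 0 ≤ -p.1 + H t x (-p.2)) ∧
    (t ∈ Ioc (0:ℝ) T → -p.1 + H t x (-p.2) ≤ 0)

/-- Epigraph of `U : ℝ × ℝ^n → ℝ∪{±∞}`. -/
def epiE {n : ℕ} (U : ℝ × Euc n → EReal) : Set ((ℝ × Euc n) × ℝ) :=
  { q | U q.1 ≤ (q.2 : EReal) }

/-- The tangent cone to `S` at `w`. -/
def tangentConeE {F : Type} [NormedAddCommGroup F] [NormedSpace ℝ F]
    (S : Set F) (w : F) : Set F :=
  { ζ | Filter.liminf (fun τ : ℝ => ((Metric.infDist (w + τ • ζ) S / τ : ℝ) : EReal))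
      (nhdsWithin (0:ℝ) (Ioi 0)) = 0 }

/-- The Euclidean pairing on `(ℝ × ℝ^n) × ℝ`. -/
def pairE {n : ℕ} (a b : (ℝ × Euc n) × ℝ) : ℝ :=
  a.1.1 * b.1.1 + ⟪a.1.2, b.1.2⟫ + a.2 * b.2

/-- The normal cone to `S` at `w`, by polarity with the tangent cone. -/
def normalConeE {n : ℕ} (S : Set ((ℝ × Euc n) × ℝ)) (w : (ℝ × Euc n) × ℝ) :
    Set ((ℝ × Euc n) × ℝ) :=
  { ξ | ∀ ζ ∈ tangentConeE S w, pairE ζ ξ ≤ 0 }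
/-! ### Auxiliary lemmas for the reduction theorem -/

section ReductionProof

variable {n : ℕ}

private lemma norm_pair (x : Euc n) (r : ℝ) : ‖((x, r) : Euc n × ℝ)‖ = max ‖x‖ |r| := by
  rw [Prod.norm_def]; simp [Real.norm_eq_abs]

private lemma norm_pair_zero (x : Euc n) : ‖((x, (0:ℝ)) : Euc n × ℝ)‖ = ‖x‖ := by
  rw [norm_pair]; simp [abs_of_nonneg, norm_nonneg]

/-- If `s * A ≤ B` for all `s ≥ 1` then `A ≤ 0`. -/
private lemma nonpos_of_forall_smul_le {A B : ℝ} (h : ∀ s : ℝ, 1 ≤ s → s * A ≤ B) : A ≤ 0 := by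
  by_contra h'
  push_neg at h'
  have hs := h (max 1 ((B + 1) / A)) (le_max_left _ _)
  have h2 : (B + 1) / A * A ≤ max 1 ((B + 1) / A) * A :=
    mul_le_mul_of_nonneg_right (le_max_right _ _) h'.le
  rw [div_mul_cancel₀ _ (ne_of_gt h')] at h2
  linarith

/-- Terms of the Legendre-Fenchel conjugate are bounded by its value when finite. -/
private lemma lfconj_term_le {H : ℝ → Euc n → Euc n → ℝ} {t : ℝ} {x v : Euc n}
    (hv : v ∈ edom (LFconj H t x)) (p : Euc n) :
    ⟪v, p⟫ - H t x p ≤ (LFconj H t x v).toReal := by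
  have h1 : ((⟪v, p⟫ - H t x p : ℝ) : EReal) ≤ LFconj H t x v :=
    le_iSup (fun p : Euc n => ((⟪v, p⟫ - H t x p : ℝ) : EReal)) p
  rw [← EReal.coe_toReal hv.1 hv.2] at h1
  exact_mod_cast h1

theorem condB_to_condA {T : ℝ} (hT : 0 < T) {H : ℝ → Euc n → Euc n → ℝ}
    (hB : CondB T H) : CondA T H := by
  obtain ⟨Hb, hom, hsl, hb1, hb2, hb3, hb4, hb5⟩ := hB
  -- basic consequences of positive homogeneity and convexity
  have hb0 : ∀ t ∈ Icc (0:ℝ) T, ∀ X : Euc n × ℝ, Hb t X 0 = 0 := by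
    intro t ht X
    have h := hom t ht X 0 0 le_rfl
    simpa using h
  have hsub : ∀ t ∈ Icc (0:ℝ) T, ∀ X P Q : Euc n × ℝ,
      Hb t X (P + Q) ≤ Hb t X P + Hb t X Q := by
    intro t ht X P Q
    have hc := (hb2 t ht X).2 (mem_univ P) (mem_univ Q)
      (by norm_num : (0:ℝ) ≤ 1/2) (by norm_num : (0:ℝ) ≤ 1/2) (by norm_num)
    have e : P + Q = (2:ℝ) • ((1/2 : ℝ) • P + (1/2:ℝ) • Q) := by module
    have h2 : Hb t X (P + Q) = 2 * Hb t X ((1/2 : ℝ) • P + (1/2:ℝ) • Q) := by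
      rw [e, hom t ht X _ 2 (by norm_num)]
    rw [smul_eq_mul, smul_eq_mul] at hc
    rw [h2]; linarith
  -- the candidate λ
  set lam : ℝ → Euc n → ℝ :=
    fun t x => max 0 (sSup ((fun P => Hb t (x, 0) P) '' Metric.closedBall 0 1)) with hlamdef
  have hball : ∀ P : Euc n × ℝ, P ∈ Metric.closedBall (0 : Euc n × ℝ) 1 ↔ ‖P‖ ≤ 1 := by
    intro P; rw [Metric.mem_closedBall, dist_zero_right]
  have hub : ∀ t ∈ Icc (0:ℝ) T, ∀ x : Euc n, ∃ C : ℝ, 0 ≤ C ∧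
      ∀ P : Euc n × ℝ, ‖P‖ ≤ 1 → Hb t (x, 0) P ≤ C := by
    intro t ht x
    obtain ⟨C, hC0, hC⟩ := hb3 ‖x‖ (norm_nonneg x)
    refine ⟨C, hC0, fun P hP => ?_⟩
    have h := hC t ht (x, 0) (by rw [norm_pair_zero]) P 0
    rw [hb0 t ht (x,0), sub_zero, sub_zero] at h
    calc Hb t (x,0) P ≤ |Hb t (x,0) P| := le_abs_self _
      _ ≤ C * ‖P‖ := h
      _ ≤ C * 1 := mul_le_mul_of_nonneg_left hP hC0
      _ = C := mul_one C
  have hbdd : ∀ t ∈ Icc (0:ℝ) T, ∀ x : Euc n,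
      BddAbove ((fun P => Hb t (x, 0) P) '' Metric.closedBall 0 1) := by
    intro t ht x
    obtain ⟨C, _, hC⟩ := hub t ht x
    exact ⟨C, by rintro y ⟨P, hP, rfl⟩; exact hC P ((hball P).1 hP)⟩
  have hlam_ge : ∀ t ∈ Icc (0:ℝ) T, ∀ x : Euc n, ∀ P : Euc n × ℝ, ‖P‖ ≤ 1 →
      Hb t (x, 0) P ≤ lam t x := by
    intro t ht x P hP
    exact le_trans (le_csSup (hbdd t ht x) (mem_image_of_mem _ ((hball P).2 hP)))
      (le_max_right _ _)
  have hlam_le : ∀ t x (b : ℝ), 0 ≤ b →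
      (∀ P : Euc n × ℝ, ‖P‖ ≤ 1 → Hb t (x, 0) P ≤ b) → lam t x ≤ b := by
    intro t x b hb0' hb
    exact max_le hb0' (Real.sSup_le (by rintro y ⟨P, hP, rfl⟩; exact hb P ((hball P).1 hP)) hb0')
  have hlam0 : ∀ t x, 0 ≤ lam t x := fun t x => le_max_left _ _
  -- H1 for H
  have hH1 : CondH1 T H := by
    have hmap : Continuous (fun q : ℝ × Euc n × Euc n =>
        ((q.1, ((q.2.1, (0:ℝ)), (q.2.2, (-1:ℝ)))) : ℝ × (Euc n × ℝ) × (Euc n × ℝ))) := by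
      fun_prop
    have hcomp : ContinuousOn (fun q : ℝ × Euc n × Euc n =>
        Hb q.1 (q.2.1, 0) (q.2.2, -1)) (Icc 0 T ×ˢ (univ : Set (Euc n × Euc n))) := by
      apply hb1.comp hmap.continuousOn
      rintro ⟨t, x, p⟩ hq
      exact ⟨hq.1, mem_univ _⟩
    apply hcomp.congr
    rintro ⟨t, x, p⟩ hq
    exact (hsl t hq.1 x 0 p).symm
  -- H2 for H
  have hH2 : CondH2 T H := by
    intro t ht x
    refine ⟨convex_univ, ?_⟩
    intro p _ q _ a b ha hb hab
    have e2 : a • ((p, (-1:ℝ)) : Euc n × ℝ) + b • ((q, (-1:ℝ)) : Euc n × ℝ)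
        = (a • p + b • q, -1) := by
      rw [Prod.smul_mk, Prod.smul_mk, Prod.mk_add_mk, smul_eq_mul, smul_eq_mul]
      have : a * (-1) + b * (-1) = -1 := by linarith
      rw [this]
    calc H t x (a • p + b • q) = Hb t (x, 0) (a • p + b • q, -1) := (hsl t ht x 0 _).symm
      _ = Hb t (x, 0) (a • (p, -1) + b • (q, -1)) := by rw [e2]
      _ ≤ a * Hb t (x, 0) (p, -1) + b * Hb t (x, 0) (q, -1) :=
          (hb2 t ht (x, 0)).2 (mem_univ _) (mem_univ _) ha hb hab
      _ = a * H t x p + b * H t x q := by rw [hsl t ht x 0 p, hsl t ht x 0 q]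
  -- H3 for H
  have hH3 : CondH3 T H := by
    intro R hR
    obtain ⟨C, hC0, hC⟩ := hb3 R hR
    refine ⟨C, hC0, fun t ht x hx p q => ?_⟩
    have h := hC t ht (x, 0) (by rw [norm_pair_zero]; exact hx) (p, -1) (q, -1)
    have e : ((p, (-1:ℝ)) : Euc n × ℝ) - (q, -1) = (p - q, 0) := by
      rw [Prod.mk_sub_mk]; norm_num
    rw [e, norm_pair_zero] at h
    rw [hsl t ht x 0 p, hsl t ht x 0 q] at h
    exact h
  -- H4 for H
  have hH4 : CondH4 T H := by
    obtain ⟨c, hci, hc0, hcae⟩ := hb4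
    refine ⟨c, hci, hc0, ?_⟩
    filter_upwards [hcae, MeasureTheory.ae_restrict_mem measurableSet_Icc] with t hct htI
    intro x p q
    have h := hct (x, 0) (p, -1) (q, -1)
    have e : ((p, (-1:ℝ)) : Euc n × ℝ) - (q, -1) = (p - q, 0) := by
      rw [Prod.mk_sub_mk]; norm_num
    rw [e, norm_pair_zero, norm_pair_zero, hsl t htI x 0 p, hsl t htI x 0 q] at h
    exact h
  -- H5 for H
  have hH5 : CondH5 T H := by
    intro R hR
    obtain ⟨k, hki, hk0, hkae⟩ := hb5 R hR
    refine ⟨fun t => 2 * k t, hki.const_mul 2, fun t => mul_nonneg (by norm_num) (hk0 t), ?_⟩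
    filter_upwards [hkae, MeasureTheory.ae_restrict_mem measurableSet_Icc] with t hkt htI
    intro x y p hx hy
    have h := hkt (x, 0) (y, 0) (p, -1) (by rw [norm_pair_zero]; exact hx)
      (by rw [norm_pair_zero]; exact hy)
    have e : ((x, (0:ℝ)) : Euc n × ℝ) - (y, 0) = (x - y, 0) := by
      rw [Prod.mk_sub_mk]; norm_num
    rw [e, norm_pair_zero, hsl t htI x 0 p, hsl t htI y 0 p] at h
    have hnp : ‖((p, (-1:ℝ)) : Euc n × ℝ)‖ ≤ 1 + ‖p‖ := by
      rw [norm_pair]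
      exact max_le (by linarith [norm_nonneg p]) (by rw [abs_neg, abs_one]; linarith [norm_nonneg p])
    have h2 : k t * (1 + ‖((p, (-1:ℝ)) : Euc n × ℝ)‖) * ‖x - y‖
        ≤ 2 * k t * (1 + ‖p‖) * ‖x - y‖ := by
      apply mul_le_mul_of_nonneg_right _ (norm_nonneg _)
      have : (1 + ‖((p, (-1:ℝ)) : Euc n × ℝ)‖) ≤ 2 * (1 + ‖p‖) := by
        have := norm_nonneg p; linarith
      calc k t * (1 + ‖((p, (-1:ℝ)) : Euc n × ℝ)‖) ≤ k t * (2 * (1 + ‖p‖)) :=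
            mul_le_mul_of_nonneg_left this (hk0 t)
        _ = 2 * k t * (1 + ‖p‖) := by ring
    exact le_trans h h2
  refine ⟨hH1, hH2, hH3, hH4, hH5, lam, ?_, ?_, ?_, ?_, ?_⟩
  · -- continuity of lam
    rw [Metric.continuousOn_iff]
    rintro ⟨t₀, x₀⟩ hq ε hε
    have ht₀ : t₀ ∈ Icc (0:ℝ) T := hq.1
    set Kc : Set (ℝ × (Euc n × ℝ) × (Euc n × ℝ)) :=
      (Icc 0 T) ×ˢ (Metric.closedBall ((x₀, (0:ℝ)) : Euc n × ℝ) 1 ×ˢ Metric.closedBall 0 1)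
      with hKcdef
    have hKc : IsCompact Kc :=
      isCompact_Icc.prod ((isCompact_closedBall _ _).prod (isCompact_closedBall _ _))
    have hsubKc : Kc ⊆ Icc 0 T ×ˢ (univ : Set ((Euc n × ℝ) × (Euc n × ℝ))) := by
      intro q hq'; exact ⟨hq'.1, mem_univ _⟩
    have hu : UniformContinuousOn
        (fun q : ℝ × (Euc n × ℝ) × (Euc n × ℝ) => Hb q.1 q.2.1 q.2.2) Kc :=
      hKc.uniformContinuousOn_of_continuous (hb1.mono hsubKc)
    rw [Metric.uniformContinuousOn_iff] at hu
    obtain ⟨δ, hδ, huc⟩ := hu (ε/2) (by linarith)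
    refine ⟨min δ 1, by positivity, ?_⟩
    rintro ⟨t, x⟩ hq' hdist
    have ht : t ∈ Icc (0:ℝ) T := hq'.1
    have hdt : dist t t₀ < δ := by
      have h1 : dist t t₀ ≤ dist ((t,x) : ℝ × Euc n) (t₀, x₀) := by
        rw [Prod.dist_eq]; exact le_max_left _ _
      calc dist t t₀ ≤ _ := h1
        _ < min δ 1 := hdist
        _ ≤ δ := min_le_left _ _
    have hdx : dist x x₀ < 1 := by
      have h1 : dist x x₀ ≤ dist ((t,x) : ℝ × Euc n) (t₀, x₀) := by
        rw [Prod.dist_eq]; exact le_max_right _ _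
      calc dist x x₀ ≤ _ := h1
        _ < min δ 1 := hdist
        _ ≤ 1 := min_le_right _ _
    have hdx' : dist x x₀ < δ := by
      have h1 : dist x x₀ ≤ dist ((t,x) : ℝ × Euc n) (t₀, x₀) := by
        rw [Prod.dist_eq]; exact le_max_right _ _
      calc dist x x₀ ≤ _ := h1
        _ < min δ 1 := hdist
        _ ≤ δ := min_le_left _ _
    -- pointwise closeness of Hb on the unit ball
    have hclose : ∀ P : Euc n × ℝ, ‖P‖ ≤ 1 →
        |Hb t (x, 0) P - Hb t₀ (x₀, 0) P| < ε/2 := by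
      intro P hP
      have hmem1 : ((t, ((x, (0:ℝ)), P)) : ℝ × (Euc n × ℝ) × (Euc n × ℝ)) ∈ Kc := by
        refine ⟨ht, ⟨?_, (hball P).2 hP⟩⟩
        rw [Metric.mem_closedBall]
        have : dist ((x, (0:ℝ)) : Euc n × ℝ) (x₀, 0) = dist x x₀ := by
          rw [Prod.dist_eq, dist_self]; exact max_eq_left dist_nonneg
        rw [this]; exact hdx.le
      have hmem2 : ((t₀, ((x₀, (0:ℝ)), P)) : ℝ × (Euc n × ℝ) × (Euc n × ℝ)) ∈ Kc := by
        refine ⟨ht₀, ⟨?_, (hball P).2 hP⟩⟩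
        rw [Metric.mem_closedBall, dist_self]
        norm_num
      have hd : dist ((t, ((x, (0:ℝ)), P)) : ℝ × (Euc n × ℝ) × (Euc n × ℝ))
          (t₀, ((x₀, 0), P)) < δ := by
        rw [Prod.dist_eq, Prod.dist_eq, Prod.dist_eq]
        simp only [dist_self]
        exact max_lt hdt (max_lt (max_lt hdx' hδ) hδ)
      have := huc _ hmem1 _ hmem2 hd
      rwa [Real.dist_eq] at this
    -- conclude
    have hcmp : ∀ (s₁ s₂ : ℝ) (x₁ x₂ : Euc n), s₁ ∈ Icc (0:ℝ) T → s₂ ∈ Icc (0:ℝ) T →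
        (∀ P : Euc n × ℝ, ‖P‖ ≤ 1 → Hb s₁ (x₁, 0) P ≤ Hb s₂ (x₂, 0) P + ε/2) →
        lam s₁ x₁ ≤ lam s₂ x₂ + ε/2 := by
      intro s₁ s₂ x₁ x₂ hs₁ hs₂ hcl
      apply hlam_le s₁ x₁ _ (by linarith [hlam0 s₂ x₂])
      intro P hP
      exact le_trans (hcl P hP) (by linarith [hlam_ge s₂ hs₂ x₂ P hP])
    have h1 : lam t x ≤ lam t₀ x₀ + ε/2 :=
      hcmp t t₀ x x₀ ht ht₀ (fun P hP => by linarith [abs_lt.1 (hclose P hP)])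
    have h2 : lam t₀ x₀ ≤ lam t x + ε/2 :=
      hcmp t₀ t x₀ x ht₀ ht (fun P hP => by linarith [abs_lt.1 (hclose P hP)])
    rw [Real.dist_eq, abs_lt]
    constructor <;> linarith
  · -- nonnegativity
    intro t _ x; exact hlam0 t x
  · -- bounds on the conjugate
    rintro t ht x v hv
    set M := (LFconj H t x v).toReal with hMdef
    have hMb : ∀ p : Euc n, ⟪v, p⟫ - H t x p ≤ M := fun p => lfconj_term_le hv p
    obtain ⟨C, hC0, hC⟩ := hb3 ‖x‖ (norm_nonneg x)
    -- first : ⟪v,p⟫ ≤ Hb t (x,0) (p,0) for all p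
    have hrec : ∀ p : Euc n, ⟪v, p⟫ ≤ Hb t (x, 0) (p, 0) := by
      intro p
      have key : ∀ s : ℝ, 1 ≤ s → s * (⟪v, p⟫ - Hb t (x, 0) (p, 0)) ≤ C + |M| := by
        intro s hs1
        have hs0 : (0:ℝ) < s := lt_of_lt_of_le one_pos hs1
        have hsmul : (s • ((p, -1/s) : Euc n × ℝ)) = ((s • p, -1) : Euc n × ℝ) := by
          rw [Prod.smul_mk, smul_eq_mul]
          congr 1
          field_simp
        have hhom := hom t ht (x, 0) ((p, -1/s) : Euc n × ℝ) s hs0.le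
        rw [hsmul] at hhom
        have hHs : H t x (s • p) = s * Hb t (x, 0) (p, -1/s) := by
          rw [← hsl t ht x 0 (s • p), hhom]
        have hterm := hMb (s • p)
        rw [real_inner_smul_right, hHs] at hterm
        -- |Hb (p,-1/s) - Hb (p,0)| ≤ C * (1/s)
        have hdiff := hC t ht (x, 0) (by rw [norm_pair_zero]) (p, -1/s) (p, 0)
        have e : ((p, -1/s) : Euc n × ℝ) - (p, 0) = ((0 : Euc n), -1/s) := by
          rw [Prod.mk_sub_mk]; norm_num
        rw [e] at hdiff
        have e2 : ‖(((0:Euc n), -1/s) : Euc n × ℝ)‖ = 1/s := by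
          rw [norm_pair, norm_zero, abs_div, abs_neg, abs_one, abs_of_pos hs0]
          exact max_eq_right (by positivity)
        rw [e2] at hdiff
        have hd1 : Hb t (x, 0) (p, -1/s) ≤ Hb t (x, 0) (p, 0) + C * (1/s) := by
          have := abs_le.1 hdiff; linarith [this.1, this.2]
        have hCs : s * (C * (1/s)) = C := by field_simp
        nlinarith [hterm, mul_le_mul_of_nonneg_left hd1 hs0.le, le_abs_self M]
      have := nonpos_of_forall_smul_le key
      linarith
    have hp0 : Hb t (x, 0) ((0 : Euc n), -1) ≤ lam t x := by
      apply hlam_ge t ht x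
      rw [norm_pair, norm_zero, abs_neg, abs_one]
      simp
    have hH0 : H t x 0 ≤ lam t x := by rw [← hsl t ht x 0 0]; exact hp0
    have hMlow : -lam t x ≤ M := by
      have := hMb 0
      rw [inner_zero_right] at this
      linarith
    constructor
    · -- ‖v‖ ≤ lam t x
      by_contra hcon
      push_neg at hcon
      have hv0 : v ≠ 0 := by
        intro h
        rw [h, norm_zero] at hcon
        exact absurd hcon (not_lt.2 (hlam0 t x))
      have hnv : (0:ℝ) < ‖v‖ := norm_pos_iff.2 hv0
      set d := ‖v‖ - lam t x with hddef
      have hdpos : 0 < d := sub_pos.2 hcon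
      set s := max 1 ((M + 1)/d) with hsdef
      have hs1 : (1:ℝ) ≤ s := le_max_left _ _
      have hs0 : (0:ℝ) < s := lt_of_lt_of_le one_pos hs1
      set u : Euc n := ‖v‖⁻¹ • v with hudef
      have hin : ⟪v, s • u⟫ = s * ‖v‖ := by
        rw [real_inner_smul_right, hudef, real_inner_smul_right,
          real_inner_self_eq_norm_mul_norm]
        field_simp
      have hsmul : (s • ((u, -1/s) : Euc n × ℝ)) = ((s • u, -1) : Euc n × ℝ) := by
        rw [Prod.smul_mk, smul_eq_mul]
        congr 1
        field_simp
      have hhom := hom t ht (x, 0) ((u, -1/s) : Euc n × ℝ) s hs0.le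
      rw [hsmul] at hhom
      have hHs : H t x (s • u) = s * Hb t (x, 0) (u, -1/s) := by
        rw [← hsl t ht x 0 (s • u), hhom]
      have hnu : ‖(( u, -1/s) : Euc n × ℝ)‖ ≤ 1 := by
        rw [norm_pair]
        apply max_le
        · rw [hudef, norm_smul, norm_inv, norm_norm]
          field_simp
          exact le_rfl
        · rw [abs_div, abs_neg, abs_one, abs_of_pos hs0, div_le_one hs0]
          exact hs1
      have hball' := hlam_ge t ht x _ hnu
      have hterm := hMb (s • u)
      rw [hin, hHs] at hterm
      have h1 : s * ‖v‖ - s * lam t x ≤ M := by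
        nlinarith [mul_le_mul_of_nonneg_left hball' hs0.le]
      have h2 : (M + 1)/d ≤ s := le_max_right _ _
      have h3 : (M+1)/d * d ≤ s * d := mul_le_mul_of_nonneg_right h2 hdpos.le
      rw [div_mul_cancel₀ _ (ne_of_gt hdpos)] at h3
      have : s * d = s * ‖v‖ - s * lam t x := by rw [hddef]; ring
      linarith
    · -- |M| ≤ lam t x
      rw [abs_le]
      refine ⟨hMlow, ?_⟩
      -- M ≤ lam t x
      have hsup : LFconj H t x v ≤ ((lam t x : ℝ) : EReal) := by
        apply iSup_le
        intro p
        rw [EReal.coe_le_coe_iff]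
        have h1 := hrec p
        have h2 : Hb t (x, 0) (p, 0) ≤ Hb t (x, 0) (p, -1) + Hb t (x, 0) (0, 1) := by
          have e : ((p, (0:ℝ)) : Euc n × ℝ) = (p, -1) + (0, 1) := by
            rw [Prod.mk_add_mk]; norm_num
          rw [e]; exact hsub t ht (x, 0) _ _
        have h3 : Hb t (x, 0) ((0 : Euc n), 1) ≤ lam t x := by
          apply hlam_ge t ht x
          rw [norm_pair, norm_zero, abs_one]; simp
        have h4 : Hb t (x, 0) (p, -1) = H t x p := hsl t ht x 0 p
        linarith
      rw [← EReal.coe_toReal hv.1 hv.2, EReal.coe_le_coe_iff] at hsup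
      exact hsup
  · -- local Lipschitz for lam
    intro R hR
    obtain ⟨k, hki, hk0, hkae⟩ := hb5 R hR
    refine ⟨fun t => 2 * k t, hki.const_mul 2, fun t => mul_nonneg (by norm_num) (hk0 t), ?_⟩
    filter_upwards [hkae, MeasureTheory.ae_restrict_mem measurableSet_Icc] with t hkt htI
    intro x y hx hy
    have hcmp : ∀ a b : Euc n, ‖a‖ ≤ R → ‖b‖ ≤ R →
        lam t a ≤ lam t b + 2 * k t * ‖a - b‖ := by
      intro a b ha hb
      have hrhs : 0 ≤ lam t b + 2 * k t * ‖a - b‖ := by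
        have := hlam0 t b
        have h2 : 0 ≤ 2 * k t * ‖a - b‖ :=
          mul_nonneg (mul_nonneg (by norm_num) (hk0 t)) (norm_nonneg _)
        linarith
      apply hlam_le t a _ hrhs
      intro P hP
      have h := hkt (a, 0) (b, 0) P (by rw [norm_pair_zero]; exact ha)
        (by rw [norm_pair_zero]; exact hb)
      have e : ((a, (0:ℝ)) : Euc n × ℝ) - (b, 0) = (a - b, 0) := by
        rw [Prod.mk_sub_mk]; norm_num
      rw [e, norm_pair_zero] at h
      have h2 : k t * (1 + ‖P‖) * ‖a - b‖ ≤ 2 * k t * ‖a - b‖ := by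
        apply mul_le_mul_of_nonneg_right _ (norm_nonneg _)
        have h3 : 1 + ‖P‖ ≤ 2 := by linarith
        calc k t * (1 + ‖P‖) ≤ k t * 2 := mul_le_mul_of_nonneg_left h3 (hk0 t)
          _ = 2 * k t := by ring
      have h4 := (abs_le.1 h).2
      have h5 := hlam_ge t htI b P hP
      linarith
    have h1 := hcmp x y hx hy
    have h2 := hcmp y x hy hx
    rw [norm_sub_rev y x] at h2
    rw [abs_le]
    constructor <;> linarith
  · -- sublinear growth of lam
    obtain ⟨c, hci, hc0, hcae⟩ := hb4
    refine ⟨c, hci, hc0, ?_⟩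
    filter_upwards [hcae, MeasureTheory.ae_restrict_mem measurableSet_Icc] with t hct htI
    intro x
    apply hlam_le t x _ (mul_nonneg (hc0 t) (by positivity))
    intro P hP
    have h := hct (x, 0) P 0
    rw [hb0 t htI (x, 0), sub_zero, sub_zero, norm_pair_zero] at h
    have h2 := (abs_le.1 h).2
    have h3 : c t * (1 + ‖x‖) * ‖P‖ ≤ c t * (1 + ‖x‖) * 1 :=
      mul_le_mul_of_nonneg_left hP (mul_nonneg (hc0 t) (by positivity))
    linarith

end ReductionProof
section ReductionProofB

variable {n : ℕ}

/-- The linear pairing used for the support function. -/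
private def payP {n : ℕ} (P z : Euc n × ℝ) : ℝ := ⟪P.1, z.1⟫ + P.2 * z.2

/-- The convex compact set whose support function extends `H`. -/
private def Kst {n : ℕ} (H : ℝ → Euc n → Euc n → ℝ) (lam : ℝ → Euc n → ℝ)
    (t : ℝ) (x : Euc n) : Set (Euc n × ℝ) :=
  {z | (∀ p : Euc n, ⟪p, z.1⟫ - H t x p ≤ z.2) ∧ z.2 ≤ lam t x}

/-- The support function of `Kst`. -/
private def sigm {n : ℕ} (H : ℝ → Euc n → Euc n → ℝ) (lam : ℝ → Euc n → ℝ)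
    (t : ℝ) (x : Euc n) (P : Euc n × ℝ) : ℝ :=
  sSup (payP P '' Kst H lam t x)

set_option maxHeartbeats 1000000 in
theorem condA_to_condB {T : ℝ} (hT : 0 < T) {H : ℝ → Euc n → Euc n → ℝ}
    (hA : CondA T H) : CondB T H := by
  obtain ⟨h1, h2, h3, h4, h5, lam, hlc, hl0, hled, hlz, hlθ⟩ := hA
  classical
  -- auxiliary: continuity of H t x in the gradient variable
  have hcont : ∀ t ∈ Icc (0:ℝ) T, ∀ x : Euc n, Continuous (H t x) := by
    intro t ht x
    obtain ⟨C, hC0, hC⟩ := h3 ‖x‖ (norm_nonneg x)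
    have hlip : LipschitzWith (Real.toNNReal C) (H t x) := by
      apply LipschitzWith.of_dist_le_mul
      intro p q
      rw [Real.dist_eq, dist_eq_norm]
      calc |H t x p - H t x q| ≤ C * ‖p - q‖ := hC t ht x le_rfl p q
        _ ≤ Real.toNNReal C * ‖p - q‖ :=
            mul_le_mul_of_nonneg_right (Real.le_coe_toNNReal C) (norm_nonneg _)
    exact hlip.continuous
  -- subgradient existence
  have hsubg : ∀ t ∈ Icc (0:ℝ) T, ∀ x p₀ : Euc n, ∃ v : Euc n,
      ∀ p, ⟪p, v⟫ - H t x p ≤ ⟪p₀, v⟫ - H t x p₀ := by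
    intro t ht x p₀
    set S : Set (Euc n × ℝ) := {z | H t x z.1 < z.2} with hSdef
    have hSo : IsOpen S := isOpen_lt ((hcont t ht x).comp continuous_fst) continuous_snd
    have hSc : Convex ℝ S := by
      rintro ⟨p1, r1⟩ hz1 ⟨p2, r2⟩ hz2 a b ha hb hab
      simp only [hSdef, mem_setOf_eq] at hz1 hz2 ⊢
      rw [Prod.smul_mk, Prod.smul_mk, Prod.mk_add_mk]
      simp only [smul_eq_mul]
      have hcv := (h2 t ht x).2 (mem_univ p1) (mem_univ p2) ha hb hab
      have hstrict : a * H t x p1 + b * H t x p2 < a * r1 + b * r2 := by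
        rcases lt_or_eq_of_le ha with ha' | ha'
        · have u1 := mul_lt_mul_of_pos_left hz1 ha'
          have u2 := mul_le_mul_of_nonneg_left hz2.le hb
          linarith
        · have hb1 : b = 1 := by rw [← ha'] at hab; linarith
          have u2 := mul_lt_mul_of_pos_left hz2 (by rw [hb1]; norm_num : (0:ℝ) < b)
          rw [← ha']
          simp only [zero_mul]
          linarith
      calc H t x (a • p1 + b • p2) ≤ a * H t x p1 + b * H t x p2 := hcv
        _ < a * r1 + b * r2 := hstrict
    have hz₀ : ((p₀, H t x p₀) : Euc n × ℝ) ∉ S := by simp [hSdef]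
    obtain ⟨f, hf⟩ := geometric_hahn_banach_open_point hSc hSo hz₀
    set s : ℝ := f ((0 : Euc n), (1:ℝ)) with hsdef
    set G : Euc n →L[ℝ] ℝ := f.comp (ContinuousLinearMap.inl ℝ (Euc n) ℝ) with hGdef
    have hdecomp : ∀ (p : Euc n) (r : ℝ), f (p, r) = G p + r * s := by
      intro p r
      have e : ((p, r) : Euc n × ℝ) = (p, 0) + r • ((0:Euc n), 1) := by
        rw [Prod.smul_mk, Prod.mk_add_mk]
        simp
      rw [e, map_add, _root_.map_smul]
      simp only [hGdef, hsdef, ContinuousLinearMap.comp_apply, ContinuousLinearMap.inl_apply,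
        smul_eq_mul]
    have hkey : ∀ (p : Euc n) (r : ℝ), H t x p < r → G p + r * s < G p₀ + H t x p₀ * s := by
      intro p r hr
      have hfp := hf (p, r) hr
      rwa [hdecomp, hdecomp] at hfp
    have hs : s < 0 := by
      have h := hkey p₀ (H t x p₀ + 1) (by linarith)
      nlinarith
    have hspos : 0 < -s := neg_pos.2 hs
    have hineq : ∀ p : Euc n, G p + H t x p * s ≤ G p₀ + H t x p₀ * s := by
      intro p
      apply le_of_forall_pos_le_add
      intro ε hε
      have hpos : 0 < ε / (-s) := div_pos hε hspos
      have h := hkey p (H t x p + ε/(-s)) (by linarith)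
      have e : (ε / (-s)) * s = -ε := by rw [div_mul_eq_mul_div, div_eq_iff hspos.ne']; ring
      nlinarith
    set v : Euc n := (InnerProductSpace.toDual ℝ (Euc n)).symm ((-s)⁻¹ • (G : Euc n →L[ℝ] ℝ))
      with hvdef
    have hvp : ∀ p : Euc n, ⟪v, p⟫ = (-s)⁻¹ * G p := by
      intro p
      rw [hvdef, InnerProductSpace.toDual_symm_apply]
      simp [ContinuousLinearMap.smul_apply, smul_eq_mul]
    refine ⟨v, fun p => ?_⟩
    rw [real_inner_comm v p, real_inner_comm v p₀, hvp p, hvp p₀]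
    have hm := mul_le_mul_of_nonneg_left (hineq p) (inv_nonneg.2 hspos.le)
    rw [mul_add, mul_add] at hm
    have e1 : (-s)⁻¹ * (H t x p * s) = -(H t x p) := by rw [inv_mul_eq_div, div_eq_iff hspos.ne']; ring
    have e2 : (-s)⁻¹ * (H t x p₀ * s) = -(H t x p₀) := by rw [inv_mul_eq_div, div_eq_iff hspos.ne']; ring
    rw [e1, e2] at hm
    linarith
  -- membership of subgradient points
  have hKmem : ∀ t ∈ Icc (0:ℝ) T, ∀ x p₀ : Euc n, ∃ z : Euc n × ℝ,
      z ∈ Kst H lam t x ∧ ⟪p₀, z.1⟫ - z.2 = H t x p₀ ∧ |z.2| ≤ lam t x := by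
    intro t ht x p₀
    obtain ⟨v, hv⟩ := hsubg t ht x p₀
    set η : ℝ := ⟪p₀, v⟫ - H t x p₀ with hηdef
    have hup : LFconj H t x v ≤ ((η : ℝ) : EReal) := by
      apply iSup_le
      intro p
      show ((⟪v, p⟫ - H t x p : ℝ) : EReal) ≤ ((η : ℝ) : EReal)
      rw [EReal.coe_le_coe_iff, real_inner_comm p v]
      exact hv p
    have hlow : ((η : ℝ) : EReal) ≤ LFconj H t x v := by
      rw [hηdef, ← real_inner_comm p₀ v]
      exact le_iSup (fun p : Euc n => ((⟪v, p⟫ - H t x p : ℝ) : EReal)) p₀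
    have heq : LFconj H t x v = ((η : ℝ) : EReal) := le_antisymm hup hlow
    have hed : v ∈ edom (LFconj H t x) :=
      ⟨by rw [heq]; exact EReal.coe_ne_top _, by rw [heq]; exact EReal.coe_ne_bot _⟩
    have htr : (LFconj H t x v).toReal = η := by rw [heq]; exact EReal.toReal_coe _
    obtain ⟨hvn, hvv⟩ := hled t ht x v hed
    rw [htr] at hvv
    refine ⟨(v, η), ⟨fun p => hv p, le_trans (le_abs_self η) hvv⟩, ?_, hvv⟩
    show ⟪p₀, v⟫ - η = H t x p₀
    rw [hηdef]; ring
  -- bounds on elements of K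
  have hKb : ∀ t ∈ Icc (0:ℝ) T, ∀ x : Euc n, ∀ z ∈ Kst H lam t x,
      ‖z.1‖ ≤ lam t x ∧ |z.2| ≤ lam t x := by
    intro t ht x z hz
    obtain ⟨z₀, hz₀K, hz₀e, hz₀b⟩ := hKmem t ht x 0
    have hH0 : H t x 0 ≤ lam t x := by
      rw [← hz₀e, inner_zero_left]
      have := (abs_le.1 hz₀b).1
      linarith
    have hlow : -lam t x ≤ z.2 := by
      have hc := hz.1 0
      rw [inner_zero_left] at hc
      linarith
    have hed : z.1 ∈ edom (LFconj H t x) := by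
      constructor
      · intro htop
        have hub : LFconj H t x z.1 ≤ ((z.2 : ℝ) : EReal) := by
          apply iSup_le
          intro p
          show ((⟪z.1, p⟫ - H t x p : ℝ) : EReal) ≤ ((z.2 : ℝ) : EReal)
          rw [EReal.coe_le_coe_iff, real_inner_comm p z.1]
          exact hz.1 p
        rw [htop] at hub
        exact (EReal.coe_ne_top z.2) (top_le_iff.1 hub)
      · intro hbot
        have hlb : ((⟪z.1, 0⟫ - H t x 0 : ℝ) : EReal) ≤ LFconj H t x z.1 :=
          le_iSup (fun p : Euc n => ((⟪z.1, p⟫ - H t x p : ℝ) : EReal)) 0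
        rw [hbot] at hlb
        exact (EReal.coe_ne_bot _) (le_bot_iff.1 hlb)
    exact ⟨(hled t ht x z.1 hed).1, abs_le.2 ⟨hlow, hz.2⟩⟩
  have hKne : ∀ t ∈ Icc (0:ℝ) T, ∀ x : Euc n, (Kst H lam t x).Nonempty := by
    intro t ht x
    obtain ⟨z, hz, _, _⟩ := hKmem t ht x 0
    exact ⟨z, hz⟩
  -- basic facts about σ
  have hpay_bound : ∀ t ∈ Icc (0:ℝ) T, ∀ x : Euc n, ∀ P : Euc n × ℝ, ∀ z ∈ Kst H lam t x,
      |payP P z| ≤ lam t x * (‖P.1‖ + |P.2|) := by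
    intro t ht x P z hz
    obtain ⟨hz1, hz2⟩ := hKb t ht x z hz
    calc |payP P z| ≤ |⟪P.1, z.1⟫| + |P.2 * z.2| := abs_add_le _ _
      _ ≤ ‖P.1‖ * ‖z.1‖ + |P.2| * |z.2| := by
          refine add_le_add (abs_real_inner_le_norm _ _) ?_
          rw [abs_mul]
      _ ≤ ‖P.1‖ * lam t x + |P.2| * lam t x :=
          add_le_add (mul_le_mul_of_nonneg_left hz1 (norm_nonneg _))
            (mul_le_mul_of_nonneg_left hz2 (abs_nonneg _))
      _ = lam t x * (‖P.1‖ + |P.2|) := by ring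
  have hbdd : ∀ t ∈ Icc (0:ℝ) T, ∀ x : Euc n, ∀ P : Euc n × ℝ, BddAbove (payP P '' Kst H lam t x) := by
    intro t ht x P
    refine ⟨lam t x * (‖P.1‖ + |P.2|), ?_⟩
    rintro r ⟨z, hzK, rfl⟩
    exact le_trans (le_abs_self _) (hpay_bound t ht x P z hzK)
  have hle_σ : ∀ t ∈ Icc (0:ℝ) T, ∀ x : Euc n, ∀ P : Euc n × ℝ, ∀ z ∈ Kst H lam t x,
      payP P z ≤ sigm H lam t x P := by
    intro t ht x P z hz
    exact le_csSup (hbdd t ht x P) (mem_image_of_mem _ hz)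
  have hσ_le : ∀ t ∈ Icc (0:ℝ) T, ∀ x : Euc n, ∀ P : Euc n × ℝ, ∀ b : ℝ,
      (∀ z ∈ Kst H lam t x, payP P z ≤ b) → sigm H lam t x P ≤ b := by
    intro t ht x P b hb
    apply csSup_le ((hKne t ht x).image _)
    rintro r ⟨z, hzK, rfl⟩
    exact hb z hzK
  -- the slice identity
  have hslice : ∀ t ∈ Icc (0:ℝ) T, ∀ x p : Euc n, sigm H lam t x (p, -1) = H t x p := by
    intro t ht x p
    apply le_antisymm
    · apply hσ_le t ht x _ _
      intro z hz
      have hc := hz.1 p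
      simp only [payP]
      linarith
    · obtain ⟨z, hzK, hze, _⟩ := hKmem t ht x p
      have hls := hle_σ t ht x (p, -1) z hzK
      have e : payP ((p, -1) : Euc n × ℝ) z = ⟪p, z.1⟫ - z.2 := by
        simp only [payP]; ring
      rw [e, hze] at hls
      exact hls
  -- positive homogeneity
  have hhom : ∀ t ∈ Icc (0:ℝ) T, ∀ x : Euc n, ∀ P : Euc n × ℝ, ∀ s : ℝ, 0 ≤ s →
      sigm H lam t x (s • P) = s * sigm H lam t x P := by
    intro t ht x P s hs
    have hpayP_smul : ∀ (c : ℝ) (z : Euc n × ℝ), payP (c • P) z = c * payP P z := by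
      intro c z
      simp only [payP, Prod.smul_fst, Prod.smul_snd, smul_eq_mul, real_inner_smul_left]
      ring
    rcases eq_or_lt_of_le hs with hs0 | hs0
    · rw [← hs0, zero_smul, zero_mul]
      apply le_antisymm
      · apply hσ_le t ht x _ _
        intro z hz
        have := hpayP_smul 0 z
        rw [zero_smul, zero_mul] at this
        rw [this]
      · obtain ⟨z, hz⟩ := hKne t ht x
        have hls := hle_σ t ht x 0 z hz
        have := hpayP_smul 0 z
        rw [zero_smul, zero_mul] at this
        rw [this] at hls
        exact hls
    · apply le_antisymm
      · apply hσ_le t ht x _ _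
        intro z hz
        rw [hpayP_smul s z]
        exact mul_le_mul_of_nonneg_left (hle_σ t ht x P z hz) hs0.le
      · have h' : sigm H lam t x P ≤ s⁻¹ * sigm H lam t x (s • P) := by
          apply hσ_le t ht x _ _
          intro z hz
          have e : payP P z = s⁻¹ * payP (s • P) z := by
            rw [hpayP_smul s z]
            field_simp
          rw [e]
          exact mul_le_mul_of_nonneg_left (hle_σ t ht x (s • P) z hz) (inv_nonneg.2 hs0.le)
        calc s * sigm H lam t x P ≤ s * (s⁻¹ * sigm H lam t x (s • P)) := mul_le_mul_of_nonneg_left h' hs0.le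
          _ = sigm H lam t x (s • P) := by field_simp
  -- Lipschitz property of σ in the gradient variable
  have hLip : ∀ t ∈ Icc (0:ℝ) T, ∀ x : Euc n, ∀ P Q : Euc n × ℝ,
      sigm H lam t x P ≤ sigm H lam t x Q + lam t x * (‖P.1 - Q.1‖ + |P.2 - Q.2|) := by
    intro t ht x P Q
    apply hσ_le t ht x _ _
    intro z hz
    obtain ⟨hz1, hz2⟩ := hKb t ht x z hz
    have e : payP P z = payP Q z + (⟪P.1 - Q.1, z.1⟫ + (P.2 - Q.2) * z.2) := by
      simp only [payP, inner_sub_left]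
      ring
    have hb1 : ⟪P.1 - Q.1, z.1⟫ ≤ ‖P.1 - Q.1‖ * lam t x := by
      calc ⟪P.1 - Q.1, z.1⟫ ≤ |⟪P.1 - Q.1, z.1⟫| := le_abs_self _
        _ ≤ ‖P.1 - Q.1‖ * ‖z.1‖ := abs_real_inner_le_norm _ _
        _ ≤ ‖P.1 - Q.1‖ * lam t x := mul_le_mul_of_nonneg_left hz1 (norm_nonneg _)
    have hb2 : (P.2 - Q.2) * z.2 ≤ |P.2 - Q.2| * lam t x := by
      calc (P.2 - Q.2) * z.2 ≤ |(P.2 - Q.2) * z.2| := le_abs_self _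
        _ = |P.2 - Q.2| * |z.2| := abs_mul _ _
        _ ≤ |P.2 - Q.2| * lam t x := mul_le_mul_of_nonneg_left hz2 (abs_nonneg _)
    have hb3 := hle_σ t ht x Q z hz
    have e2 : lam t x * (‖P.1 - Q.1‖ + |P.2 - Q.2|)
        = ‖P.1 - Q.1‖ * lam t x + |P.2 - Q.2| * lam t x := by ring
    rw [e, e2]
    linarith
  have hσLip : ∀ t ∈ Icc (0:ℝ) T, ∀ (x : Euc n) (Λ' : ℝ), lam t x ≤ Λ' →
      ∀ P Q : Euc n × ℝ, |sigm H lam t x P - sigm H lam t x Q| ≤ 2 * Λ' * ‖P - Q‖ := by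
    intro t ht x Λ' hΛ' P Q
    have hΛ'0 : 0 ≤ Λ' := le_trans (hl0 t ht x) hΛ'
    have key : ∀ A B : Euc n × ℝ, sigm H lam t x A ≤ sigm H lam t x B + 2 * Λ' * ‖A - B‖ := by
      intro A B
      have l1 := hLip t ht x A B
      have hd1 : ‖A.1 - B.1‖ ≤ ‖A - B‖ := by
        have := norm_fst_le (A - B)
        simpa using this
      have hd2 : |A.2 - B.2| ≤ ‖A - B‖ := by
        have := norm_snd_le (A - B)
        simpa [Real.norm_eq_abs] using this
      have hb : lam t x * (‖A.1 - B.1‖ + |A.2 - B.2|) ≤ Λ' * (2 * ‖A - B‖) :=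
        mul_le_mul hΛ' (by linarith) (by positivity) hΛ'0
      have e : Λ' * (2 * ‖A - B‖) = 2 * Λ' * ‖A - B‖ := by ring
      linarith [hb, e ▸ hb]
    have k1 := key P Q
    have k2 := key Q P
    rw [norm_sub_rev Q P] at k2
    rw [abs_le]
    exact ⟨by linarith, by linarith⟩
  -- a useful upper bound for H in terms of σ
  have hDom : ∀ t ∈ Icc (0:ℝ) T, ∀ (y : Euc n) (P : Euc n × ℝ) (s : ℝ), 0 < s →
      H t y (s • P.1) ≤ s * (sigm H lam t y P - P.2 * lam t y) + lam t y := by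
    intro t ht y P s hs
    rw [← hslice t ht y (s • P.1)]
    apply hσ_le t ht y _ _
    rintro ⟨w, ρ⟩ hw
    obtain ⟨hwc, hwl⟩ := hw
    obtain ⟨hwn, hwa⟩ := hKb t ht y (w, ρ) ⟨hwc, hwl⟩
    have hwK : ((w, lam t y) : Euc n × ℝ) ∈ Kst H lam t y :=
      ⟨fun p => le_trans (hwc p) hwl, le_rfl⟩
    have h6 := hle_σ t ht y P _ hwK
    simp only [payP] at h6 ⊢
    rw [real_inner_smul_left]
    have hρ : -lam t y ≤ ρ := (abs_le.1 hwa).1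
    have h7 : ⟪P.1, w⟫ ≤ sigm H lam t y P - P.2 * lam t y := by linarith
    have h8 := mul_le_mul_of_nonneg_left h7 hs.le
    linarith
  -- Estimate Lemma 1 (globally weighted closeness)
  have hEst1 : ∀ t ∈ Icc (0:ℝ) T, ∀ (x y : Euc n) (κ κ' : ℝ), 0 ≤ κ → 0 ≤ κ' →
      (∀ p, H t x p ≤ H t y p + κ * (1 + ‖p‖)) → lam t x ≤ lam t y + κ' →
      ∀ P : Euc n × ℝ, sigm H lam t x P ≤ sigm H lam t y P + (κ + κ') * (‖P.1‖ + |P.2|) := by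
    intro t ht x y κ κ' hκ hκ' hH hlam P
    apply hσ_le t ht x _ _
    rintro ⟨v, η⟩ hz
    obtain ⟨hzc, hzl⟩ := hz
    obtain ⟨hzn, hza⟩ := hKb t ht x (v, η) ⟨hzc, hzl⟩
    rcases lt_or_ge P.2 0 with hq | hq
    · -- P.2 < 0
      set m : ℝ := -P.2 with hm
      clear_value m
      have hm0 : 0 < m := by rw [hm]; linarith
      have hc := hzc (m⁻¹ • P.1)
      rw [real_inner_smul_left] at hc
      have h1 : payP P (v, η) ≤ m * H t x (m⁻¹ • P.1) := by
        simp only [payP]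
        have hmul := mul_le_mul_of_nonneg_left hc hm0.le
        rw [mul_sub] at hmul
        have e : m * (m⁻¹ * ⟪P.1, v⟫) = ⟪P.1, v⟫ := by field_simp
        rw [e] at hmul
        have : m * η = -(P.2 * η) := by rw [hm]; ring
        linarith
      have h2 : m * H t x (m⁻¹ • P.1) ≤ m * H t y (m⁻¹ • P.1) + κ * (m + ‖P.1‖) := by
        have hnorm : ‖m⁻¹ • P.1‖ = m⁻¹ * ‖P.1‖ := by
          rw [norm_smul, norm_inv, Real.norm_eq_abs, abs_of_pos hm0]
        have hmul := mul_le_mul_of_nonneg_left (hH (m⁻¹ • P.1)) hm0.le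
        rw [mul_add, hnorm] at hmul
        have e : m * (κ * (1 + m⁻¹ * ‖P.1‖)) = κ * (m + ‖P.1‖) := by
          field_simp
          try ring
        rw [e] at hmul
        linarith
      have h3 : sigm H lam t y P = m * H t y (m⁻¹ • P.1) := by
        have e : (P : Euc n × ℝ) = m • ((m⁻¹ • P.1, -1) : Euc n × ℝ) := by
          rw [Prod.smul_mk, smul_smul, mul_inv_cancel₀ hm0.ne', one_smul, smul_eq_mul]
          rw [hm]
          exact Prod.ext rfl (by ring)
        conv_lhs => rw [e]
        rw [hhom t ht y _ m hm0.le, hslice t ht y]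
      have h4 : κ * (m + ‖P.1‖) ≤ (κ + κ') * (‖P.1‖ + |P.2|) := by
        have hmabs : m = |P.2| := by rw [hm, abs_of_neg hq]
        rw [hmabs]
        nlinarith [norm_nonneg P.1, abs_nonneg P.2]
      linarith
    · -- 0 ≤ P.2
      have hkey : ∀ s : ℝ, 0 < s → payP P (v, η) ≤
          sigm H lam t y P + κ * ‖P.1‖ + P.2 * κ' + (κ + lam t x + lam t y) / s := by
        intro s hs
        have hi := hzc (s • P.1)
        rw [real_inner_smul_left] at hi
        have hii := hDom t ht y P s hs
        have hHs := hH (s • P.1)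
        have hnorm : ‖s • P.1‖ = s * ‖P.1‖ := by
          rw [norm_smul, Real.norm_eq_abs, abs_of_pos hs]
        rw [hnorm] at hHs
        have hmain : s * ⟪P.1, v⟫ ≤
            s * (sigm H lam t y P - P.2 * lam t y) + lam t y + κ * (1 + s * ‖P.1‖) + lam t x := by
          linarith [hzl]
        have hiii : P.2 * η ≤ P.2 * lam t y + P.2 * κ' := by
          have u1 := mul_le_mul_of_nonneg_left hzl hq
          have u2 := mul_le_mul_of_nonneg_left hlam hq
          rw [mul_add] at u2
          linarith
        have hiii' := mul_le_mul_of_nonneg_left hiii hs.le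
        have hfin : payP P (v, η) - (sigm H lam t y P + κ * ‖P.1‖ + P.2 * κ') ≤
            (κ + lam t x + lam t y) / s := by
          rw [le_div_iff₀ hs]
          simp only [payP]
          nlinarith [hmain, hiii']
        linarith
      have hB0 : 0 ≤ κ + lam t x + lam t y := by
        have := hl0 t ht x
        have := hl0 t ht y
        linarith
      have hlim : payP P (v, η) ≤ sigm H lam t y P + κ * ‖P.1‖ + P.2 * κ' := by
        apply le_of_forall_pos_le_add
        intro ε hε
        have hks := hkey ((κ + lam t x + lam t y + 1)/ε) (by positivity)
        have hq2 : (κ + lam t x + lam t y) / ((κ + lam t x + lam t y + 1)/ε) ≤ ε := by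
          rw [div_div_eq_mul_div, div_le_iff₀ (by linarith)]
          nlinarith
        linarith
      have hfin2 : κ * ‖P.1‖ + P.2 * κ' ≤ (κ + κ') * (‖P.1‖ + |P.2|) := by
        have u1 := mul_le_mul_of_nonneg_right (le_abs_self P.2) hκ'
        nlinarith [mul_nonneg hκ (abs_nonneg P.2), mul_nonneg hκ' (norm_nonneg P.1)]
      linarith
  -- Estimate Lemma 2 (truncated closeness)
  have hEst2 : ∀ t ∈ Icc (0:ℝ) T, ∀ t' ∈ Icc (0:ℝ) T, ∀ (x x' : Euc n) (S ρ δ κ' Λ : ℝ),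
      1 ≤ S → 1 ≤ ρ → 0 ≤ δ → 0 ≤ κ' → lam t x ≤ Λ → lam t' x' ≤ Λ →
      (∀ p : Euc n, ‖p‖ ≤ S → H t x p ≤ H t' x' p + δ) → lam t x ≤ lam t' x' + κ' →
      ∀ P : Euc n × ℝ, ‖P.1‖ ≤ ρ → |P.2| ≤ ρ →
      sigm H lam t x P ≤ sigm H lam t' x' P + ρ * (δ + κ' + (4 * Λ + δ) / S) := by
    intro t ht t' ht' x x' S ρ δ κ' Λ hS1 hρ1 hδ0 hκ'0 hΛx hΛx' hδ hκ'c P hP1 hP2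
    have hS0 : (0:ℝ) < S := lt_of_lt_of_le one_pos hS1
    have hρ0 : (0:ℝ) < ρ := lt_of_lt_of_le one_pos hρ1
    have hΛ0 : 0 ≤ Λ := le_trans (hl0 t ht x) hΛx
    apply hσ_le t ht x _ _
    rintro ⟨v, η⟩ hz
    obtain ⟨hzc, hzl⟩ := hz
    obtain ⟨hzn, hza⟩ := hKb t ht x (v, η) ⟨hzc, hzl⟩
    rcases le_or_gt P.2 (-(ρ/S)) with hq | hq
    · -- steep case
      set m : ℝ := -P.2 with hm
      clear_value m
      have hm1 : ρ/S ≤ m := by rw [hm]; linarith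
      have hm0 : 0 < m := lt_of_lt_of_le (by positivity) hm1
      have hmρ : m ≤ ρ := by
        have := (abs_le.1 hP2).1
        rw [hm]; linarith
      have hc := hzc (m⁻¹ • P.1)
      rw [real_inner_smul_left] at hc
      have h1 : payP P (v, η) ≤ m * H t x (m⁻¹ • P.1) := by
        simp only [payP]
        have hmul := mul_le_mul_of_nonneg_left hc hm0.le
        rw [mul_sub] at hmul
        have e : m * (m⁻¹ * ⟪P.1, v⟫) = ⟪P.1, v⟫ := by field_simp
        rw [e] at hmul
        have e2 : m * η = -(P.2 * η) := by rw [hm]; ring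
        linarith
      have hnorm : ‖m⁻¹ • P.1‖ ≤ S := by
        rw [norm_smul, norm_inv, Real.norm_eq_abs, abs_of_pos hm0]
        rw [inv_mul_le_iff₀ hm0]
        calc ‖P.1‖ ≤ ρ := hP1
          _ = (ρ / S) * S := by field_simp
          _ ≤ m * S := mul_le_mul_of_nonneg_right hm1 hS0.le
      have h2 : m * H t x (m⁻¹ • P.1) ≤ m * H t' x' (m⁻¹ • P.1) + m * δ := by
        have hmul := mul_le_mul_of_nonneg_left (hδ _ hnorm) hm0.le
        rw [mul_add] at hmul
        linarith
      have h3 : sigm H lam t' x' P = m * H t' x' (m⁻¹ • P.1) := by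
        have e : (P : Euc n × ℝ) = m • ((m⁻¹ • P.1, -1) : Euc n × ℝ) := by
          rw [Prod.smul_mk, smul_smul, mul_inv_cancel₀ hm0.ne', one_smul, smul_eq_mul]
          rw [hm]
          exact Prod.ext rfl (by ring)
        conv_lhs => rw [e]
        rw [hhom t' ht' x' _ m hm0.le, hslice t' ht' x']
      have h4 : m * δ ≤ ρ * δ := mul_le_mul_of_nonneg_right hmρ hδ0
      have h5' : 0 ≤ ρ * (κ' + (4 * Λ + δ) / S) := by positivity
      nlinarith [h1, h2, h3, h4, h5']
    · -- flat case
      have hs0 : (0:ℝ) < S / ρ := by positivity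
      have hi := hzc ((S/ρ) • P.1)
      rw [real_inner_smul_left] at hi
      have hnormS : ‖(S/ρ) • P.1‖ ≤ S := by
        rw [norm_smul, Real.norm_eq_abs, abs_of_pos hs0]
        calc S / ρ * ‖P.1‖ ≤ S / ρ * ρ := mul_le_mul_of_nonneg_left hP1 hs0.le
          _ = S := by field_simp
      have hii := hDom t' ht' x' P (S/ρ) hs0
      have hδs := hδ _ hnormS
      have hmain : (S/ρ) * ⟪P.1, v⟫ ≤
          (S/ρ) * (sigm H lam t' x' P - P.2 * lam t' x') + lam t' x' + δ + lam t x := by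
        linarith [hzl]
      have hiii : P.2 * η ≤ P.2 * lam t' x' + ρ * κ' + 2 * Λ * ρ / S := by
        rcases le_or_gt 0 P.2 with hq2 | hq2
        · have u1 := mul_le_mul_of_nonneg_left hzl hq2
          have u2 := mul_le_mul_of_nonneg_left hκ'c hq2
          rw [mul_add] at u2
          have u3 : P.2 * κ' ≤ ρ * κ' :=
            mul_le_mul_of_nonneg_right (le_trans (le_abs_self _) hP2) hκ'0
          have u4 : 0 ≤ 2 * Λ * ρ / S := by positivity
          linarith
        · have hb : |P.2 * (η - lam t' x')| ≤ (ρ/S) * (2*Λ) := by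
            rw [abs_mul]
            apply mul_le_mul
            · rw [abs_of_neg hq2]; linarith
            · have hηb : |η| ≤ Λ := le_trans hza hΛx
              have h_lam : 0 ≤ lam t' x' := hl0 t' ht' x'
              calc |η - lam t' x'| ≤ |η| + |lam t' x'| := abs_sub _ _
                _ ≤ Λ + Λ := add_le_add hηb (by rw [abs_of_nonneg h_lam]; exact hΛx')
                _ = 2*Λ := by ring
            · exact abs_nonneg _
            · positivity
          have hb2 := (abs_le.1 hb).2
          have u5 : 0 ≤ ρ * κ' := by positivity
          have e : (ρ/S)*(2*Λ) = 2*Λ*ρ/S := by ring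
          nlinarith [hb2]
      have hiii' := mul_le_mul_of_nonneg_left hiii hs0.le
      have hfin : payP P (v, η) - (sigm H lam t' x' P + ρ * κ' + 2*Λ*ρ/S) ≤
          (lam t' x' + δ + lam t x) / (S/ρ) := by
        rw [le_div_iff₀ hs0]
        simp only [payP]
        nlinarith [hmain, hiii']
      have hbound : (lam t' x' + δ + lam t x) / (S/ρ) ≤ ρ * (2*Λ + δ)/S := by
        rw [div_div_eq_mul_div]
        rw [div_le_div_iff₀ hS0 hS0]
        have hmul := mul_le_mul_of_nonneg_right (mul_le_mul_of_nonneg_right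
          (show lam t' x' + δ + lam t x ≤ 2*Λ + δ by linarith) hρ0.le) hS0.le
        nlinarith [hmul]
      have e : ρ * (δ + κ' + (4*Λ + δ)/S) = ρ*δ + ρ*κ' + (2*Λ*ρ/S + ρ*(2*Λ+δ)/S) := by
        field_simp
        ring
      nlinarith [hfin, hbound, mul_nonneg hρ0.le hδ0]
  -- clamping of the time variable
  have hproj_mem : ∀ t : ℝ, min (max t 0) T ∈ Icc (0:ℝ) T := fun t =>
    ⟨le_min (le_max_right t 0) hT.le, min_le_right _ _⟩
  have hproj_eq : ∀ t ∈ Icc (0:ℝ) T, min (max t 0) T = t := by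
    intro t ht
    rw [max_eq_left ht.1, min_eq_left ht.2]
  refine ⟨fun t X P => sigm H lam (min (max t 0) T) X.1 P, ?_, ?_, ?_, ?_, ?_, ?_, ?_⟩
  · -- positive homogeneity
    intro t _ X P s hs
    exact hhom _ (hproj_mem t) X.1 P s hs
  · -- slice property
    intro t ht x r p
    show sigm H lam (min (max t 0) T) x (p, -1) = H t x p
    rw [hproj_eq t ht]
    exact hslice t ht x p
  · -- (H1) continuity
    show ContinuousOn (fun q : ℝ × (Euc n × ℝ) × (Euc n × ℝ) =>
      sigm H lam (min (max q.1 0) T) q.2.1.1 q.2.2)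
      (Icc 0 T ×ˢ (univ : Set ((Euc n × ℝ) × (Euc n × ℝ))))
    rw [Metric.continuousOn_iff]
    rintro ⟨t₀, X₀, P₀⟩ hq ε hε
    have ht₀ : t₀ ∈ Icc (0:ℝ) T := hq.1
    have hcomp1 : IsCompact (Icc (0:ℝ) T ×ˢ Metric.closedBall X₀.1 1) :=
      isCompact_Icc.prod (isCompact_closedBall _ _)
    have hne1 : (Icc (0:ℝ) T ×ˢ Metric.closedBall X₀.1 1).Nonempty :=
      ⟨(0, X₀.1), ⟨⟨le_refl 0, hT.le⟩, Metric.mem_closedBall_self zero_le_one⟩⟩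
    obtain ⟨w, hw, hwmax⟩ := hcomp1.exists_isMaxOn hne1
      (hlc.mono (fun q hq' => ⟨hq'.1, mem_univ _⟩))
    set Λ : ℝ := max (lam w.1 w.2) 1 with hΛdef
    have hΛ1 : (1:ℝ) ≤ Λ := le_max_right _ _
    have hΛ0 : (0:ℝ) < Λ := lt_of_lt_of_le one_pos hΛ1
    have hΛb : ∀ t ∈ Icc (0:ℝ) T, ∀ x : Euc n, dist x X₀.1 ≤ 1 → lam t x ≤ Λ := by
      intro t ht x hx
      exact le_trans (isMaxOn_iff.1 hwmax (t, x) ⟨ht, Metric.mem_closedBall.2 hx⟩)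
        (le_max_left _ _)
    set ρ : ℝ := ‖P₀‖ + 2 with hρdef
    have hρ1 : (1:ℝ) ≤ ρ := by
      have := norm_nonneg P₀
      rw [hρdef]; linarith
    have hρ0 : (0:ℝ) < ρ := lt_of_lt_of_le one_pos hρ1
    set S : ℝ := max 1 (8 * ρ * (4 * Λ + 1) / ε) with hSdef
    have hS1 : (1:ℝ) ≤ S := le_max_left _ _
    have hS0 : (0:ℝ) < S := lt_of_lt_of_le one_pos hS1
    have hSb : ρ * ((4 * Λ + 1) / S) ≤ ε / 8 := by
      have h8 : 8 * ρ * (4 * Λ + 1) / ε ≤ S := le_max_right _ _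
      have h9 : ε * (8 * ρ * (4 * Λ + 1) / ε) = 8 * ρ * (4 * Λ + 1) := by field_simp
      have h10 := mul_le_mul_of_nonneg_left h8 hε.le
      rw [h9] at h10
      rw [← mul_div_assoc, div_le_div_iff₀ hS0 (by norm_num : (0:ℝ) < 8)]
      nlinarith [h10]
    set db : ℝ := min (ε / (8 * ρ)) 1 with hdbdef
    have hdb0 : 0 < db := by rw [hdbdef]; positivity
    have hdb1 : db ≤ 1 := min_le_right _ _
    have hdbρ : ρ * db ≤ ε / 8 := by
      have h1' : db ≤ ε / (8*ρ) := min_le_left _ _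
      calc ρ * db ≤ ρ * (ε / (8*ρ)) := mul_le_mul_of_nonneg_left h1' hρ0.le
        _ = ε / 8 := by field_simp
    have hcomp2 : IsCompact ((Icc (0:ℝ) T) ×ˢ
        (Metric.closedBall X₀.1 1 ×ˢ Metric.closedBall (0 : Euc n) S)) :=
      isCompact_Icc.prod ((isCompact_closedBall _ _).prod (isCompact_closedBall _ _))
    have hu := hcomp2.uniformContinuousOn_of_continuous
      (h1.mono (fun q hq' => ⟨hq'.1, mem_univ _⟩))
    rw [Metric.uniformContinuousOn_iff] at hu
    obtain ⟨δ₁, hδ₁, huc⟩ := hu db hdb0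
    have hu2 := hcomp1.uniformContinuousOn_of_continuous
      (hlc.mono (fun q hq' => ⟨hq'.1, mem_univ _⟩))
    rw [Metric.uniformContinuousOn_iff] at hu2
    obtain ⟨δ₂, hδ₂, huc2⟩ := hu2 db hdb0
    refine ⟨min (min δ₁ δ₂) (min 1 (ε / (16 * Λ))), by positivity, ?_⟩
    rintro ⟨t, X, P⟩ hq' hdist
    have ht : t ∈ Icc (0:ℝ) T := hq'.1
    have hde : dist ((t, X, P) : ℝ × (Euc n × ℝ) × (Euc n × ℝ)) (t₀, X₀, P₀)
        = max (dist t t₀) (max (dist X X₀) (dist P P₀)) := by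
      rw [Prod.dist_eq, Prod.dist_eq]
    rw [hde] at hdist
    have h_t : dist t t₀ < min (min δ₁ δ₂) (min 1 (ε / (16 * Λ))) :=
      lt_of_le_of_lt (le_max_left _ _) hdist
    have h_X : dist X X₀ < min (min δ₁ δ₂) (min 1 (ε / (16 * Λ))) :=
      lt_of_le_of_lt (le_trans (le_max_left _ _) (le_max_right _ _)) hdist
    have h_P : dist P P₀ < min (min δ₁ δ₂) (min 1 (ε / (16 * Λ))) :=
      lt_of_le_of_lt (le_trans (le_max_right _ _) (le_max_right _ _)) hdist
    have h_x : dist X.1 X₀.1 < min (min δ₁ δ₂) (min 1 (ε / (16 * Λ))) :=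
      lt_of_le_of_lt (by rw [Prod.dist_eq]; exact le_max_left _ _) h_X
    have hm1' : min (min δ₁ δ₂) (min 1 (ε / (16 * Λ))) ≤ 1 :=
      le_trans (min_le_right _ _) (min_le_left _ _)
    have hmδ₁ : min (min δ₁ δ₂) (min 1 (ε / (16 * Λ))) ≤ δ₁ :=
      le_trans (min_le_left _ _) (min_le_left _ _)
    have hmδ₂ : min (min δ₁ δ₂) (min 1 (ε / (16 * Λ))) ≤ δ₂ :=
      le_trans (min_le_left _ _) (min_le_right _ _)
    have hmε : min (min δ₁ δ₂) (min 1 (ε / (16 * Λ))) ≤ ε / (16 * Λ) :=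
      le_trans (min_le_right _ _) (min_le_right _ _)
    have hxball : dist X.1 X₀.1 ≤ 1 := le_of_lt (lt_of_lt_of_le h_x hm1')
    have hHclose : ∀ p : Euc n, ‖p‖ ≤ S → |H t X.1 p - H t₀ X₀.1 p| ≤ db := by
      intro p hp
      have hm1 : ((t, (X.1, p)) : ℝ × Euc n × Euc n) ∈ (Icc (0:ℝ) T) ×ˢ
          (Metric.closedBall X₀.1 1 ×ˢ Metric.closedBall (0 : Euc n) S) :=
        ⟨ht, ⟨Metric.mem_closedBall.2 hxball, mem_closedBall_zero_iff.2 hp⟩⟩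
      have hm2 : ((t₀, (X₀.1, p)) : ℝ × Euc n × Euc n) ∈ (Icc (0:ℝ) T) ×ˢ
          (Metric.closedBall X₀.1 1 ×ˢ Metric.closedBall (0 : Euc n) S) :=
        ⟨ht₀, ⟨Metric.mem_closedBall_self zero_le_one, mem_closedBall_zero_iff.2 hp⟩⟩
      have hd : dist ((t, (X.1, p)) : ℝ × Euc n × Euc n) (t₀, (X₀.1, p)) < δ₁ := by
        rw [Prod.dist_eq, Prod.dist_eq, dist_self]
        apply max_lt (lt_of_lt_of_le h_t hmδ₁)
        apply max_lt (lt_of_lt_of_le h_x hmδ₁)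
        exact hδ₁
      have := huc _ hm1 _ hm2 hd
      rw [Real.dist_eq] at this
      exact this.le
    have hlamclose : |lam t X.1 - lam t₀ X₀.1| ≤ db := by
      have hm1 : ((t, X.1) : ℝ × Euc n) ∈ Icc (0:ℝ) T ×ˢ Metric.closedBall X₀.1 1 :=
        ⟨ht, Metric.mem_closedBall.2 hxball⟩
      have hm2 : ((t₀, X₀.1) : ℝ × Euc n) ∈ Icc (0:ℝ) T ×ˢ Metric.closedBall X₀.1 1 :=
        ⟨ht₀, Metric.mem_closedBall_self zero_le_one⟩
      have hd : dist ((t, X.1) : ℝ × Euc n) (t₀, X₀.1) < δ₂ := by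
        rw [Prod.dist_eq]
        exact max_lt (lt_of_lt_of_le h_t hmδ₂) (lt_of_lt_of_le h_x hmδ₂)
      have := huc2 _ hm1 _ hm2 hd
      rw [Real.dist_eq] at this
      exact this.le
    have hb1 : lam t X.1 ≤ Λ := hΛb t ht X.1 hxball
    have hb2 : lam t₀ X₀.1 ≤ Λ := hΛb t₀ ht₀ X₀.1 (by rw [dist_self]; norm_num)
    have hP₀1 : ‖P₀.1‖ ≤ ρ := le_trans (norm_fst_le P₀) (by rw [hρdef]; linarith)
    have hP₀2 : |P₀.2| ≤ ρ := by
      have := norm_snd_le P₀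
      rw [Real.norm_eq_abs] at this
      exact le_trans this (by rw [hρdef]; linarith)
    have hdir1 := hEst2 t ht t₀ ht₀ X.1 X₀.1 S ρ db db Λ hS1 hρ1 hdb0.le hdb0.le hb1 hb2
      (fun p hp => by linarith [(abs_le.1 (hHclose p hp)).2])
      (by linarith [(abs_le.1 hlamclose).2]) P₀ hP₀1 hP₀2
    have hdir2 := hEst2 t₀ ht₀ t ht X₀.1 X.1 S ρ db db Λ hS1 hρ1 hdb0.le hdb0.le hb2 hb1
      (fun p hp => by linarith [(abs_le.1 (hHclose p hp)).1])
      (by linarith [(abs_le.1 hlamclose).1]) P₀ hP₀1 hP₀2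
    have hmid : |sigm H lam t X.1 P₀ - sigm H lam t₀ X₀.1 P₀| ≤ 3*(ε/8) := by
      have hgr : (4*Λ + db)/S ≤ (4*Λ+1)/S := by gcongr
      have u1 : ρ * (db + db + (4*Λ + db)/S) ≤ 3*(ε/8) := by
        have u2 := mul_le_mul_of_nonneg_left hgr hρ0.le
        have u3 : ρ * (db + db + (4*Λ + db)/S)
            = ρ * db + ρ * db + ρ * ((4*Λ+db)/S) := by ring
        have u4 : ρ * ((4*Λ+1)/S) ≤ ε/8 := hSb
        linarith
      rw [abs_le]
      constructor
      · linarith [hdir2]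
      · linarith [hdir1]
    have hPl := hσLip t ht X.1 Λ hb1 P P₀
    have hPP : ‖P - P₀‖ < ε/(16*Λ) := by
      rw [← dist_eq_norm]
      exact lt_of_lt_of_le h_P hmε
    have hPLfin : 2*Λ*‖P - P₀‖ < ε/8 := by
      have := mul_lt_mul_of_pos_left hPP (by positivity : (0:ℝ) < 2*Λ)
      have e : 2*Λ*(ε/(16*Λ)) = ε/8 := by field_simp; ring
      linarith
    rw [Real.dist_eq]
    have e1 : sigm H lam (min (max t 0) T) X.1 P = sigm H lam t X.1 P := by
      rw [hproj_eq t ht]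
    have e2 : sigm H lam (min (max t₀ 0) T) X₀.1 P₀ = sigm H lam t₀ X₀.1 P₀ := by
      rw [hproj_eq t₀ ht₀]
    calc |sigm H lam (min (max t 0) T) X.1 P - sigm H lam (min (max t₀ 0) T) X₀.1 P₀|
        = |sigm H lam t X.1 P - sigm H lam t₀ X₀.1 P₀| := by rw [e1, e2]
      _ ≤ |sigm H lam t X.1 P - sigm H lam t X.1 P₀|
          + |sigm H lam t X.1 P₀ - sigm H lam t₀ X₀.1 P₀| := abs_sub_le _ _ _
      _ ≤ 2*Λ*‖P - P₀‖ + 3*(ε/8) := add_le_add hPl hmid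
      _ < ε/8 + 3*(ε/8) := by linarith
      _ ≤ ε := by linarith
  · -- (H2) convexity
    intro t _ X
    refine ⟨convex_univ, ?_⟩
    intro P _ Q _ a b ha hb hab
    simp only [smul_eq_mul]
    apply hσ_le _ (hproj_mem t) X.1 _ _
    intro z hz
    have e : payP (a • P + b • Q) z = a * payP P z + b * payP Q z := by
      simp only [payP, Prod.fst_add, Prod.snd_add, Prod.smul_fst, Prod.smul_snd,
        smul_eq_mul, inner_add_left, real_inner_smul_left]
      ring
    rw [e]
    exact add_le_add (mul_le_mul_of_nonneg_left (hle_σ _ (hproj_mem t) X.1 P z hz) ha)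
      (mul_le_mul_of_nonneg_left (hle_σ _ (hproj_mem t) X.1 Q z hz) hb)
  · -- (H3)
    intro R hR
    have hcomp : IsCompact (Icc (0:ℝ) T ×ˢ Metric.closedBall (0 : Euc n) R) :=
      isCompact_Icc.prod (isCompact_closedBall _ _)
    have hne : (Icc (0:ℝ) T ×ˢ Metric.closedBall (0 : Euc n) R).Nonempty :=
      ⟨(0, 0), ⟨⟨le_refl 0, hT.le⟩, Metric.mem_closedBall_self hR⟩⟩
    obtain ⟨w, hw, hwmax⟩ := hcomp.exists_isMaxOn hne
      (hlc.mono (fun q hq' => ⟨hq'.1, mem_univ _⟩))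
    refine ⟨2 * max (lam w.1 w.2) 0, mul_nonneg (by norm_num) (le_max_right _ _), ?_⟩
    intro t ht X hX P Q
    have hb : lam t X.1 ≤ max (lam w.1 w.2) 0 :=
      le_trans (isMaxOn_iff.1 hwmax (t, X.1)
        ⟨ht, mem_closedBall_zero_iff.2 (le_trans (norm_fst_le X) hX)⟩) (le_max_left _ _)
    show |sigm H lam (min (max t 0) T) X.1 P - sigm H lam (min (max t 0) T) X.1 Q| ≤ _
    rw [hproj_eq t ht]
    exact hσLip t ht X.1 _ hb P Q
  · -- (H4)
    obtain ⟨θ, hθi, hθ0, hθae⟩ := hlθ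
    refine ⟨fun t => 2 * θ t, hθi.const_mul 2, fun t => mul_nonneg (by norm_num) (hθ0 t), ?_⟩
    filter_upwards [hθae, MeasureTheory.ae_restrict_mem measurableSet_Icc] with t hθt htI
    intro X P Q
    show |sigm H lam (min (max t 0) T) X.1 P - sigm H lam (min (max t 0) T) X.1 Q| ≤ _
    rw [hproj_eq t htI]
    have hl := hσLip t htI X.1 (θ t * (1 + ‖X.1‖)) (hθt X.1) P Q
    have h2' : 2 * (θ t * (1 + ‖X.1‖)) * ‖P - Q‖ ≤ 2 * θ t * (1 + ‖X‖) * ‖P - Q‖ := by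
      apply mul_le_mul_of_nonneg_right _ (norm_nonneg _)
      have hfst := norm_fst_le X
      nlinarith [hθ0 t]
    linarith
  · -- (H5)
    intro R hR
    obtain ⟨k, hki, hk0, hkae⟩ := h5 R hR
    obtain ⟨ζ, hζi, hζ0, hζae⟩ := hlz R hR
    refine ⟨fun t => 2 * (k t + ζ t), (hki.add hζi).const_mul 2,
      fun t => mul_nonneg (by norm_num) (add_nonneg (hk0 t) (hζ0 t)), ?_⟩
    filter_upwards [hkae, hζae, MeasureTheory.ae_restrict_mem measurableSet_Icc]
      with t hkt hζt htI
    intro X Y P hX hY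
    show |sigm H lam (min (max t 0) T) X.1 P - sigm H lam (min (max t 0) T) Y.1 P| ≤ _
    rw [hproj_eq t htI]
    have hx : ‖X.1‖ ≤ R := le_trans (norm_fst_le X) hX
    have hy : ‖Y.1‖ ≤ R := le_trans (norm_fst_le Y) hY
    have hxy : ‖X.1 - Y.1‖ ≤ ‖X - Y‖ := by
      have := norm_fst_le (X - Y)
      simpa using this
    have hκ0 : 0 ≤ k t * ‖X.1 - Y.1‖ := mul_nonneg (hk0 t) (norm_nonneg _)
    have hκ'0 : 0 ≤ ζ t * ‖X.1 - Y.1‖ := mul_nonneg (hζ0 t) (norm_nonneg _)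
    have hd1 : ∀ p, H t X.1 p ≤ H t Y.1 p + (k t * ‖X.1 - Y.1‖) * (1 + ‖p‖) := by
      intro p
      have h := (abs_le.1 (hkt X.1 Y.1 p hx hy)).2
      nlinarith [h]
    have hd1' : ∀ p, H t Y.1 p ≤ H t X.1 p + (k t * ‖X.1 - Y.1‖) * (1 + ‖p‖) := by
      intro p
      have h := (abs_le.1 (hkt X.1 Y.1 p hx hy)).1
      nlinarith [h]
    have hd2 : lam t X.1 ≤ lam t Y.1 + ζ t * ‖X.1 - Y.1‖ := by
      have h := (abs_le.1 (hζt X.1 Y.1 hx hy)).2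
      linarith
    have hd2' : lam t Y.1 ≤ lam t X.1 + ζ t * ‖X.1 - Y.1‖ := by
      have h := (abs_le.1 (hζt X.1 Y.1 hx hy)).1
      linarith
    have e1 := hEst1 t htI X.1 Y.1 _ _ hκ0 hκ'0 hd1 hd2 P
    have e2 := hEst1 t htI Y.1 X.1 _ _ hκ0 hκ'0 hd1' hd2' P
    have hPb : ‖P.1‖ + |P.2| ≤ 2 * (1 + ‖P‖) := by
      have hf := norm_fst_le P
      have hsn := norm_snd_le P
      rw [Real.norm_eq_abs] at hsn
      have := norm_nonneg P
      linarith
    have hcoefb : k t * ‖X.1 - Y.1‖ + ζ t * ‖X.1 - Y.1‖ ≤ (k t + ζ t) * ‖X - Y‖ := by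
      nlinarith [hxy, hk0 t, hζ0 t]
    have hfin : (k t * ‖X.1 - Y.1‖ + ζ t * ‖X.1 - Y.1‖) * (‖P.1‖ + |P.2|) ≤
        2 * (k t + ζ t) * (1 + ‖P‖) * ‖X - Y‖ := by
      calc (k t * ‖X.1 - Y.1‖ + ζ t * ‖X.1 - Y.1‖) * (‖P.1‖ + |P.2|)
          ≤ ((k t + ζ t) * ‖X - Y‖) * (2 * (1 + ‖P‖)) := by
            apply mul_le_mul hcoefb hPb (by positivity)
            exact mul_nonneg (add_nonneg (hk0 t) (hζ0 t)) (norm_nonneg _)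
        _ = 2 * (k t + ζ t) * (1 + ‖P‖) * ‖X - Y‖ := by ring
    rw [abs_le]
    constructor
    · linarith [e2]
    · linarith [e1]

end ReductionProofB

/-- **Theorem 1.1 (Reduction).** For `T > 0` and a Hamiltonian
`H : [0,T]×ℝ^N×ℝ^N → ℝ`, condition (A) holds iff condition (B) holds. -/
theorem reduction_of_hamiltonians (T : ℝ) (hT : 0 < T) (N : ℕ)
    (H : ℝ → Euc N → Euc N → ℝ) :
    CondA T H ↔ CondB T H :=
  ⟨fun hA => condA_to_condB hT hA, fun hB => condB_to_condA hT hB⟩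

end
end

section
/- Assume H : [0,T]×ℝ^N×ℝ^N → ℝ satisfies (H1)–(H2) and set L(t,x,·) = H*(t,x,·). Then L satisfies (L1), (L2) and (L3). If additionally H satisfies (H3), then L satisfies (L4). If additionally H satisfies (H4), then there exists a measure zero set 𝒩 ⊆ [0,T] such that L satisfies (L5) with this 𝒩. -/
open MeasureTheory Filter Set Topology
open scoped RealInnerProductSpace

noncomputable section

namespace ConjProof

variable {N : ℕ}

/-- Continuity of `H t x ·` from (H1). -/
lemma cont_p {T : ℝ} {H : ℝ → Euc N → Euc N → ℝ} (h1 : CondH1 T H)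
    {t : ℝ} (ht : t ∈ Icc (0:ℝ) T) (x : Euc N) :
    Continuous fun p : Euc N => H t x p := by
  have : (fun p : Euc N => H t x p)
      = (fun q : ℝ × Euc N × Euc N => H q.1 q.2.1 q.2.2) ∘ (fun p => (t, x, p)) := rfl
  rw [this]
  exact h1.comp_continuous (by fun_prop) (fun p => ⟨ht, mem_univ _⟩)

lemma le_LFconj {H : ℝ → Euc N → Euc N → ℝ} (t : ℝ) (x v : Euc N) (p : Euc N) :
    ((⟪v, p⟫ - H t x p : ℝ) : EReal) ≤ LFconj H t x v :=
  le_iSup (fun p : Euc N => ((⟪v, p⟫ - H t x p : ℝ) : EReal)) p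

lemma LFconj_ne_bot {H : ℝ → Euc N → Euc N → ℝ} (t : ℝ) (x v : Euc N) :
    LFconj H t x v ≠ ⊥ :=
  ne_bot_of_le_ne_bot (EReal.coe_ne_bot _) (le_LFconj t x v 0)

/-- Core: if `H t x · ≤ H t x 0 + C‖·‖` and `C < ‖v‖` then the conjugate is `⊤`. -/
lemma LFconj_top {H : ℝ → Euc N → Euc N → ℝ} {t : ℝ} {x : Euc N} {C : ℝ} (hC : 0 ≤ C)
    (hlip : ∀ p : Euc N, H t x p ≤ H t x 0 + C * ‖p‖)
    {v : Euc N} (hv : C < ‖v‖) : LFconj H t x v = ⊤ := by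
  rw [LFconj, iSup_eq_top]
  intro b hb
  induction b with
  | bot => exact ⟨0, bot_lt_iff_ne_bot.2 (EReal.coe_ne_bot _)⟩
  | coe r =>
      have hvpos : 0 < ‖v‖ := lt_of_le_of_lt hC hv
      set s : ℝ := max 0 ((r + 1 + H t x 0) / (‖v‖ - C)) with hs
      have hs0 : 0 ≤ s := le_max_left _ _
      refine ⟨s • (‖v‖⁻¹ • v), ?_⟩
      have hnorm : ‖s • (‖v‖⁻¹ • v)‖ = s := by
        rw [norm_smul, norm_smul, Real.norm_eq_abs, Real.norm_eq_abs, abs_of_nonneg hs0,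
          abs_of_nonneg (inv_nonneg.2 hvpos.le), inv_mul_cancel₀ hvpos.ne', mul_one]
      have hinner : ⟪v, s • (‖v‖⁻¹ • v)⟫ = s * ‖v‖ := by
        rw [real_inner_smul_right, real_inner_smul_right, real_inner_self_eq_norm_sq]
        field_simp
      have hsle : (r + 1 + H t x 0) / (‖v‖ - C) ≤ s := le_max_right _ _
      have h1 : r + 1 + H t x 0 ≤ s * (‖v‖ - C) := by
        rw [div_le_iff₀ (by linarith)] at hsle
        linarith
      have h2 : r < ⟪v, s • (‖v‖⁻¹ • v)⟫ - H t x (s • (‖v‖⁻¹ • v)) := by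
        have := hlip (s • (‖v‖⁻¹ • v))
        rw [hnorm] at this
        rw [hinner]
        nlinarith
      exact_mod_cast EReal.coe_lt_coe_iff.2 h2
  | top => exact absurd hb (lt_irrefl _)

end ConjProof
namespace ConjProof2
open ConjProof

variable {N : ℕ}

lemma condL1 {T : ℝ} {H : ℝ → Euc N → Euc N → ℝ} (h1 : CondH1 T H) :
    CondL1 T (LFconj H) := by
  rw [CondL1]
  simp only [LFconj]
  apply lowerSemicontinuousOn_iSup
  intro p
  apply ContinuousOn.lowerSemicontinuousOn
  apply ContinuousOn.comp (g := fun r : ℝ => (r : EReal))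
    (f := fun q : ℝ × Euc N × Euc N => ⟪q.2.2, p⟫ - H q.1 q.2.1 p)
    continuous_coe_real_ereal.continuousOn ?_ (mapsTo_univ _ _)
  apply ContinuousOn.sub
  · exact (Continuous.inner (continuous_snd.comp continuous_snd) continuous_const).continuousOn
  · exact h1.comp
      ((continuous_fst.prodMk ((continuous_fst.comp continuous_snd).prodMk
        continuous_const)).continuousOn)
      (fun q (hq : q ∈ Icc (0:ℝ) T ×ˢ (univ : Set (Euc N × Euc N))) => ⟨hq.1, mem_univ _⟩)

lemma econvex {T : ℝ} {H : ℝ → Euc N → Euc N → ℝ} (h2 : CondH2 T H)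
    {t : ℝ} (ht : t ∈ Icc (0:ℝ) T) (x : Euc N) : EConvex (LFconj H t x) := by
  intro v w a b ha hb hab
  rw [LFconj]
  refine iSup_le fun p => ?_
  have key : ⟪a • v + b • w, p⟫ - H t x p
      = a * (⟪v, p⟫ - H t x p) + b * (⟪w, p⟫ - H t x p) := by
    rw [inner_add_left, real_inner_smul_left, real_inner_smul_left]
    linear_combination H t x p * hab
  rw [key, EReal.coe_add, EReal.coe_mul, EReal.coe_mul]
  exact add_le_add
    (mul_le_mul_of_nonneg_left (le_LFconj t x v p) (by exact_mod_cast ha))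
    (mul_le_mul_of_nonneg_left (le_LFconj t x w p) (by exact_mod_cast hb))

lemma eproper {T : ℝ} {H : ℝ → Euc N → Euc N → ℝ} (h1 : CondH1 T H) (h2 : CondH2 T H)
    {t : ℝ} (ht : t ∈ Icc (0:ℝ) T) (x : Euc N) : EProper (LFconj H t x) := by
  refine ⟨fun v => LFconj_ne_bot t x v, ?_⟩
  have hc : Continuous fun p : Euc N => H t x p := cont_p h1 ht x
  have hconv : ConvexOn ℝ univ (H t x) := h2 t ht x
  set S : Set (Euc N × ℝ) := {z | H t x z.1 < z.2} with hS
  have hSo : IsOpen S := isOpen_lt (hc.comp continuous_fst) continuous_snd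
  have hSc : Convex ℝ S := by
    intro z1 hz1 z2 hz2 a b ha hb hab
    simp only [hS, mem_setOf_eq] at hz1 hz2 ⊢
    have hcomb := hconv.2 (mem_univ z1.1) (mem_univ z2.1) ha hb hab
    have hsnd : (a • z1 + b • z2).2 = a * z1.2 + b * z2.2 := rfl
    have hfst : (a • z1 + b • z2).1 = a • z1.1 + b • z2.1 := rfl
    rw [hsnd, hfst]
    rcases eq_or_lt_of_le ha with h | h
    · have hb1 : b = 1 := by linarith
      have ha0 : a = 0 := h.symm
      simp only [ha0, hb1, zero_smul, zero_add, one_smul, zero_mul, one_mul]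
      exact hz2
    · calc H t x (a • z1.1 + b • z2.1) ≤ a * H t x z1.1 + b * H t x z2.1 := hcomb
        _ < a * z1.2 + b * z2.2 :=
          add_lt_add_of_lt_of_le (mul_lt_mul_of_pos_left hz1 h)
            (mul_le_mul_of_nonneg_left hz2.le hb)
  have hz0 : ((0 : Euc N), H t x 0) ∉ S := by simp [hS]
  obtain ⟨ℓ, hℓ⟩ := geometric_hahn_banach_open_point hSc hSo hz0
  set β : ℝ := ℓ ((0 : Euc N), (1:ℝ)) with hβdef
  have hdec : ∀ (p : Euc N) (r : ℝ), ℓ (p, r) = ℓ (p, 0) + r * β := by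
    intro p r
    have : ((p, r) : Euc N × ℝ) = (p, 0) + r • ((0:Euc N), (1:ℝ)) := by
      simp [Prod.ext_iff]
    rw [this, map_add, ContinuousLinearMap.map_smul, smul_eq_mul]
  have hβ : β < 0 := by
    have hmem : ((0:Euc N), H t x 0 + 1) ∈ S := by simp [hS]
    have := hℓ _ hmem
    rw [hdec] at this
    rw [hdec 0 (H t x 0)] at this
    linarith
  set c₀ : ℝ := ℓ ((0:Euc N), H t x 0) with hc₀
  have key : ∀ p : Euc N, ℓ (p, 0) + H t x p * β ≤ c₀ := by
    intro p
    apply le_of_forall_pos_le_add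
    intro ε hε
    have hε' : 0 < ε / (-β) := div_pos hε (neg_pos.2 hβ)
    have hmem : ((p, H t x p + ε / (-β)) : Euc N × ℝ) ∈ S := by
      simp only [hS, mem_setOf_eq]; linarith
    have h1 := hℓ _ hmem
    rw [hdec] at h1
    have h2 : (ε / (-β)) * β = -ε := by
      rw [div_mul_eq_mul_div, mul_div_assoc, div_neg, div_self hβ.ne, mul_neg, mul_one]
    nlinarith
  set γ : ℝ := (-β)⁻¹ with hγdef
  have hγ : 0 < γ := inv_pos.2 (neg_pos.2 hβ)
  have hγβ : γ * β = -1 := by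
    rw [hγdef, inv_mul_eq_div, div_neg, div_self hβ.ne]
  set g : Euc N →L[ℝ] ℝ := γ • (ℓ.comp (ContinuousLinearMap.inl ℝ (Euc N) ℝ)) with hg
  set v : Euc N := (InnerProductSpace.toDual ℝ (Euc N)).symm g with hv
  refine ⟨v, ?_⟩
  have hbound : ∀ p : Euc N, ⟪v, p⟫ - H t x p ≤ γ * c₀ := by
    intro p
    have hvp : ⟪v, p⟫ = γ * ℓ (p, 0) := by
      rw [hv, InnerProductSpace.toDual_symm_apply]
      simp [hg]
    have hm := mul_le_mul_of_nonneg_left (key p) hγ.le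
    have h3 : γ * (H t x p * β) = - H t x p := by
      calc γ * (H t x p * β) = (γ * β) * H t x p := by ring
      _ = - H t x p := by rw [hγβ]; ring
    rw [mul_add, h3] at hm
    rw [hvp]
    linarith
  have : LFconj H t x v ≤ ((γ * c₀ : ℝ) : EReal) := by
    rw [LFconj]
    exact iSup_le fun p => EReal.coe_le_coe_iff.2 (hbound p)
  exact ne_top_of_le_ne_top (EReal.coe_ne_top _) this

end ConjProof2
namespace ConjProof3

variable {N : ℕ}

set_option maxHeartbeats 1000000 in
/-- Key construction: an approximate conjugate-domain point for a nearby convex function. -/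
lemma key_construction (fm f : Euc N → ℝ) (hfmc : Continuous fm)
    (hfmconv : ConvexOn ℝ (univ : Set (Euc N)) fm)
    (v : Euc N) (K C₁ ε la r : ℝ)
    (hε : 0 < ε) (hε1 : ε ≤ 1)
    (hKp : ∀ p, ⟪v, p⟫ - f p ≤ K)
    (hC₁ : ∀ p : Euc N, ‖p‖ ≤ 1 → |f p| ≤ C₁)
    (hla : la = 2 * (f 0 + K + 2) / ε ^ 2)
    (hr : r = 1 + 2 * la * (5 * C₁ + ‖v‖ + 6))
    (hm : ∀ p : Euc N, ‖p‖ ≤ r → |fm p - f p| ≤ ε) :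
    ∃ w : Euc N, ‖w - v‖ ≤ ε ∧ ∀ p, ⟪w, p⟫ - fm p ≤ K + ε := by
  have hC₁0 : 0 ≤ C₁ := (abs_nonneg _).trans (hC₁ 0 (by simp))
  have hD0 : 0 ≤ f 0 + K := by have := hKp 0; rw [inner_zero_right] at this; linarith
  have hD2 : 2 ≤ f 0 + K + 2 := by linarith
  have hla0 : 0 < la := by rw [hla]; positivity
  have hla4 : 4 ≤ la := by
    rw [hla]
    have h1 : ε ^ 2 ≤ 1 := by nlinarith
    have h2 : (0:ℝ) < ε ^ 2 := by positivity
    calc (4:ℝ) ≤ 2 * (f 0 + K + 2) / 1 := by linarith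
      _ ≤ 2 * (f 0 + K + 2) / ε ^ 2 := by
          apply div_le_div_of_nonneg_left (by linarith) h2 h1
  have hr1 : 1 ≤ r := by rw [hr]; nlinarith [norm_nonneg v]
  -- fm bounds on the unit ball
  have hC₁m : ∀ p : Euc N, ‖p‖ ≤ 1 → |fm p| ≤ C₁ + 1 := by
    intro p hp
    have h1 := hm p (hp.trans hr1)
    have h2 := hC₁ p hp
    rw [abs_le] at h1 h2 ⊢
    constructor <;> linarith [h1.1, h1.2, h2.1, h2.2]
  -- global linear lower bound for fm by convexity
  have hlb : ∀ p : Euc N, -(2 * C₁ + 2) * (1 + ‖p‖) ≤ fm p := by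
    intro p
    rcases le_or_gt ‖p‖ 1 with h | h
    · have := abs_le.1 (hC₁m p h)
      nlinarith [norm_nonneg p]
    · have hp0 : (0:ℝ) < ‖p‖ := by linarith
      set b : ℝ := ‖p‖⁻¹ with hb
      have hb0 : 0 < b := inv_pos.2 hp0
      have hb1 : b ≤ 1 := by rw [hb]; exact inv_le_one_of_one_le₀ h.le
      have hbp : b * ‖p‖ = 1 := inv_mul_cancel₀ hp0.ne'
      have hcomb := hfmconv.2 (mem_univ (0:Euc N)) (mem_univ p)
        (show (0:ℝ) ≤ 1 - b by linarith) hb0.le (show 1 - b + b = 1 by ring)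
      rw [smul_zero, zero_add] at hcomb
      have hnu : ‖b • p‖ = 1 := by
        rw [norm_smul, Real.norm_eq_abs, abs_of_pos hb0, hbp]
      have h1 := abs_le.1 (hC₁m _ hnu.le)
      have h0 := abs_le.1 (hC₁m 0 (by simp))
      -- b * fm p ≥ fm (b•p) - (1-b) * fm 0
      simp only [smul_eq_mul] at hcomb
      have h2 : -(C₁+1) - (1-b)*(C₁+1) ≤ b * fm p := by
        nlinarith [h1.1, mul_le_mul_of_nonneg_left h0.2 (by linarith : (0:ℝ) ≤ 1 - b)]
      -- multiply by ‖p‖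
      have h3 := mul_le_mul_of_nonneg_left h2 hp0.le
      rw [show ‖p‖ * (b * fm p) = (b * ‖p‖) * fm p by ring, hbp, one_mul] at h3
      nlinarith [h3]
  -- the penalised functional
  set χ : Euc N → ℝ := fun p => 2 * la * (fm p - ⟪v, p⟫) + ‖p‖ ^ 2 with hχ
  have hχc : Continuous χ := by
    apply Continuous.add
    · exact continuous_const.mul (hfmc.sub (Continuous.inner continuous_const continuous_id))
    · exact (continuous_norm).pow 2
  have hχ0 : χ 0 = 2 * la * fm 0 := by
    simp [hχ, inner_zero_right]
  -- coercivity with slack 1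
  have hcoer : ∀ p : Euc N, r ≤ ‖p‖ → χ 0 + 1 ≤ χ p := by
    intro p hp
    have hp1 : 1 ≤ ‖p‖ := hr1.trans hp
    have hip := abs_le.1 (abs_real_inner_le_norm v p)
    have hsq : r * ‖p‖ ≤ ‖p‖ ^ 2 := by nlinarith
    have hlbp := hlb p
    have hfm0 := abs_le.1 (hC₁m 0 (by simp))
    rw [hχ0]
    simp only [hχ]
    nlinarith [mul_le_mul_of_nonneg_left hlbp (by linarith : (0:ℝ) ≤ 2 * la),
      mul_le_mul_of_nonneg_left hip.2 (by linarith : (0:ℝ) ≤ 2 * la),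
      mul_le_mul_of_nonneg_left hp1 (by positivity : (0:ℝ) ≤ 2 * la * C₁),
      mul_le_mul_of_nonneg_left hp1 (by linarith : (0:ℝ) ≤ 2 * la)]
  -- existence of a global minimiser
  obtain ⟨pm, -, hpm⟩ := hχc.continuousOn.exists_isMinOn' (s := univ) isClosed_univ
    (mem_univ (0:Euc N)) (by
      have : Filter.cocompact (Euc N) ⊓ Filter.principal univ = Filter.cocompact (Euc N) := by
        rw [principal_univ, inf_top_eq]
      rw [this]
      refine Filter.hasBasis_cocompact.eventually_iff.2
        ⟨Metric.closedBall 0 r, isCompact_closedBall _ _, fun p hp => ?_⟩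
      have hpr : r ≤ ‖p‖ := by
        by_contra hcon
        exact hp (by simpa [Metric.mem_closedBall, dist_zero_right] using le_of_not_ge hcon)
      linarith [hcoer p hpr])
  have hmin : ∀ q : Euc N, χ pm ≤ χ q := fun q => isMinOn_iff.1 hpm q (mem_univ q)
  have hpmr : ‖pm‖ ≤ r := by
    by_contra hcon
    have := hcoer pm (le_of_not_ge hcon)
    linarith [hmin 0]
  -- variational inequality at the minimiser
  have hVI : ∀ p : Euc N,
      0 ≤ 2 * la * ((fm p - ⟪v, p⟫) - (fm pm - ⟪v, pm⟫)) + 2 * ⟪pm, p - pm⟫ := by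
    intro p
    set d : Euc N := p - pm with hd
    set E : ℝ := 2 * la * ((fm p - ⟪v, p⟫) - (fm pm - ⟪v, pm⟫)) + 2 * ⟪pm, d⟫ with hE
    have hsZ : ∀ s : ℝ, 0 < s → s ≤ 1 → 0 ≤ E + s * ‖d‖ ^ 2 := by
      intro s hs hs1
      have hcomb := hfmconv.2 (mem_univ pm) (mem_univ p)
        (show (0:ℝ) ≤ 1 - s by linarith) hs.le (show 1 - s + s = 1 by ring)
      simp only [smul_eq_mul] at hcomb
      have heq : (1 - s) • pm + s • p = pm + s • d := by
        rw [hd, smul_sub, sub_smul, one_smul]; abel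
      rw [heq] at hcomb
      have hminq := hmin (pm + s • d)
      have e2 : ⟪v, pm + s • d⟫ = ⟪v, pm⟫ + s * ⟪v, d⟫ := by
        rw [inner_add_right, real_inner_smul_right]
      have e3 : ‖pm + s • d‖ ^ 2 = ‖pm‖ ^ 2 + 2 * (s * ⟪pm, d⟫) + s ^ 2 * ‖d‖ ^ 2 := by
        rw [norm_add_sq_real, real_inner_smul_right, norm_smul, Real.norm_eq_abs,
          abs_of_pos hs, mul_pow]
      have e4 : ⟪v, d⟫ = ⟪v, p⟫ - ⟪v, pm⟫ := by rw [hd, inner_sub_right]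
      simp only [hχ] at hminq
      rw [e2, e3] at hminq
      have hA : 0 ≤ (2 * la * (fm (pm + s • d) - (⟪v, pm⟫ + s * ⟪v, d⟫))
          + (‖pm‖ ^ 2 + 2 * (s * ⟪pm, d⟫) + s ^ 2 * ‖d‖ ^ 2))
          - (2 * la * (fm pm - ⟪v, pm⟫) + ‖pm‖ ^ 2) := by linarith [hminq]
      have hB : 0 ≤ 2 * la * ((1 - s) * fm pm + s * fm p - fm (pm + s • d)) := by
        have := mul_le_mul_of_nonneg_left hcomb (show (0:ℝ) ≤ 2 * la by linarith)
        linarith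
      have key : 0 ≤ s * (E + s * ‖d‖ ^ 2) := by
        have hkeyeq : s * (E + s * ‖d‖ ^ 2)
            = ((2 * la * (fm (pm + s • d) - (⟪v, pm⟫ + s * ⟪v, d⟫))
          + (‖pm‖ ^ 2 + 2 * (s * ⟪pm, d⟫) + s ^ 2 * ‖d‖ ^ 2))
          - (2 * la * (fm pm - ⟪v, pm⟫) + ‖pm‖ ^ 2))
          + 2 * la * ((1 - s) * fm pm + s * fm p - fm (pm + s • d)) := by
          rw [hE, e4]; ring
        rw [hkeyeq]
        exact add_nonneg hA hB
      have h0 : s * 0 ≤ s * (E + s * ‖d‖ ^ 2) := by rw [mul_zero]; exact key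
      exact le_of_mul_le_mul_left h0 hs
    rcases le_or_gt 0 E with hok | hneg
    · exact hok
    · exfalso
      rcases eq_or_ne d 0 with hd0 | hd0
      · have h1 := hsZ 1 one_pos le_rfl
        rw [hd0, norm_zero] at h1
        simp at h1
        linarith
      · have hd2 : (0:ℝ) < ‖d‖ ^ 2 := pow_pos (norm_pos_iff.2 hd0) 2
        set s0 : ℝ := min 1 (-E / (2 * ‖d‖ ^ 2)) with hs0
        have hs0pos : 0 < s0 := lt_min one_pos (div_pos (by linarith) (by linarith [hd2]))
        have h1 := hsZ s0 hs0pos (min_le_left _ _)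
        have h2 : s0 * ‖d‖ ^ 2 ≤ -E / 2 := by
          have h3 : s0 ≤ -E / (2 * ‖d‖ ^ 2) := min_le_right _ _
          have h4 := mul_le_mul_of_nonneg_right h3 (le_of_lt hd2)
          have h5 : (-E / (2 * ‖d‖ ^ 2)) * ‖d‖ ^ 2 = -E / 2 := by
            field_simp
          rw [h5] at h4
          exact h4
        linarith
  -- quantitative bounds
  have hφpm : -K - ε ≤ fm pm - ⟪v, pm⟫ := by
    have h1 := abs_le.1 (hm pm hpmr)
    have h2 := hKp pm
    linarith [h1.1]
  have hfm0 : fm 0 ≤ f 0 + ε := by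
    have h1 := abs_le.1 (hm 0 (by simp; linarith))
    linarith [h1.2]
  have hpm2 : ‖pm‖ ^ 2 ≤ la * (f 0 + K + 2) := by
    have h := hVI 0
    rw [zero_sub, inner_neg_right, real_inner_self_eq_norm_sq, inner_zero_right] at h
    nlinarith [mul_le_mul_of_nonneg_left
      (show fm 0 - 0 - (fm pm - ⟪v, pm⟫) ≤ f 0 + K + 2 by linarith) hla0.le]
  have hlaε : la * ε ^ 2 = 2 * (f 0 + K + 2) := by
    rw [hla]
    field_simp
  have hpmla : ‖pm‖ ≤ la * ε := by
    have h1 : ‖pm‖ ^ 2 ≤ (la * ε) ^ 2 := by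
      calc ‖pm‖ ^ 2 ≤ la * (f 0 + K + 2) := hpm2
        _ ≤ la * (2 * (f 0 + K + 2)) := by nlinarith
        _ = la * (la * ε ^ 2) := by rw [hlaε]
        _ = (la * ε) ^ 2 := by ring
    nlinarith [norm_nonneg pm, mul_nonneg hla0.le hε.le]
  refine ⟨v - la⁻¹ • pm, ?_, ?_⟩
  · rw [sub_sub_cancel_left, norm_neg, norm_smul, Real.norm_eq_abs,
      abs_of_pos (inv_pos.2 hla0)]
    calc la⁻¹ * ‖pm‖ ≤ la⁻¹ * (la * ε) :=
          mul_le_mul_of_nonneg_left hpmla (inv_nonneg.2 hla0.le)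
      _ = ε := by field_simp
  · intro p
    have h := hVI p
    have hw : ⟪v - la⁻¹ • pm, p⟫ = ⟪v, p⟫ - la⁻¹ * ⟪pm, p⟫ := by
      rw [inner_sub_left, real_inner_smul_left]
    have hip : (0:ℝ) ≤ ⟪pm, pm⟫ := real_inner_self_nonneg
    have e5 : ⟪pm, p - pm⟫ = ⟪pm, p⟫ - ⟪pm, pm⟫ := inner_sub_right _ _ _
    rw [e5] at h
    have hterm : 2 * la * ((⟪v, p⟫ - la⁻¹ * ⟪pm, p⟫) - fm p)
        = 2 * la * (⟪v, p⟫ - fm p) - 2 * ⟪pm, p⟫ := by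
      field_simp
      ring
    have hmul : 2 * la * ((⟪v, p⟫ - la⁻¹ * ⟪pm, p⟫) - fm p) ≤ 2 * la * (K + ε) := by
      rw [hterm]
      nlinarith [h, mul_le_mul_of_nonneg_left hφpm (by linarith : (0:ℝ) ≤ 2 * la), hip]
    have hfin := le_of_mul_le_mul_left hmul (by linarith : (0:ℝ) < 2 * la)
    rw [hw]
    linarith

end ConjProof3
namespace ConjProof4
open ConjProof ConjProof2 ConjProof3

variable {N : ℕ}

set_option maxHeartbeats 1000000 in
lemma condL3 {T : ℝ} {H : ℝ → Euc N → Euc N → ℝ} (hH1 : CondH1 T H) (hH2 : CondH2 T H) :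
    CondL3 T (LFconj H) := by
  classical
  intro t ht x v tm xm htm hconv
  have hL1 : CondL1 T (LFconj H) := condL1 hH1
  have lsc_lower : ∀ vm : ℕ → Euc N, Tendsto vm atTop (nhds v) →
      ∀ b : EReal, b < LFconj H t x v →
      ∀ᶠ m in Filter.atTop, b < LFconj H (tm m) (xm m) (vm m) := by
    intro vm hvm b hb
    have htt : Tendsto tm atTop (nhds t) := (continuous_fst.tendsto _).comp hconv
    have hxx : Tendsto xm atTop (nhds x) := (continuous_snd.tendsto _).comp hconv
    have hseq : Tendsto (fun m => ((tm m, xm m, vm m) : ℝ × Euc N × Euc N)) atTop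
        (nhds (t, x, v)) := htt.prodMk_nhds (hxx.prodMk_nhds hvm)
    have hseq' : Tendsto (fun m => ((tm m, xm m, vm m) : ℝ × Euc N × Euc N)) atTop
        (nhdsWithin (t, x, v) (Icc (0:ℝ) T ×ˢ (univ : Set (Euc N × Euc N)))) :=
      tendsto_nhdsWithin_of_tendsto_nhds_of_eventually_within _ hseq
        (Filter.Eventually.of_forall fun m => ⟨htm m, mem_univ _⟩)
    exact hseq'.eventually (hL1 (t, x, v) ⟨ht, mem_univ _⟩ b hb)
  by_cases htop : LFconj H t x v = ⊤
  · refine ⟨fun _ => v, tendsto_const_nhds, ?_⟩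
    rw [htop]
    refine tendsto_order.2 ⟨fun b hb => ?_, fun b hb => absurd hb not_top_lt⟩
    exact lsc_lower _ tendsto_const_nhds b (by rw [htop]; exact hb)
  · set K : ℝ := (LFconj H t x v).toReal with hKdef
    have hbot : LFconj H t x v ≠ ⊥ := LFconj_ne_bot t x v
    have hK : LFconj H t x v = ((K : ℝ) : EReal) := (EReal.coe_toReal htop hbot).symm
    have hKp : ∀ p : Euc N, ⟪v, p⟫ - H t x p ≤ K := by
      intro p
      have h := le_LFconj (H := H) t x v p
      rw [hK] at h
      exact_mod_cast h
    have hfc : Continuous (H t x) := cont_p hH1 ht x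
    obtain ⟨C₁, hC₁⟩ := (isCompact_closedBall (0:Euc N) 1).exists_bound_of_continuousOn
      hfc.continuousOn
    have hC₁' : ∀ p : Euc N, ‖p‖ ≤ 1 → |H t x p| ≤ C₁ := by
      intro p hp
      have := hC₁ p (by simpa [Metric.mem_closedBall, dist_zero_right] using hp)
      simpa [Real.norm_eq_abs] using this
    have main : ∀ ε : ℝ, 0 < ε → ε ≤ 1 → ∀ᶠ m in Filter.atTop, ∃ w : Euc N,
        ‖w - v‖ ≤ ε ∧ LFconj H (tm m) (xm m) w ≤ ((K + ε : ℝ) : EReal) := by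
      intro ε hε hε1
      set la : ℝ := 2 * (H t x 0 + K + 2) / ε ^ 2 with hla
      set r : ℝ := 1 + 2 * la * (5 * C₁ + ‖v‖ + 6) with hr
      have hKset : IsCompact ((Icc (0:ℝ) T) ×ˢ
          ((Metric.closedBall x 1) ×ˢ (Metric.closedBall (0:Euc N) r))) :=
        isCompact_Icc.prod ((isCompact_closedBall _ _).prod (isCompact_closedBall _ _))
      have hsub : ((Icc (0:ℝ) T) ×ˢ ((Metric.closedBall x 1) ×ˢ
          (Metric.closedBall (0:Euc N) r))) ⊆ Icc (0:ℝ) T ×ˢ (univ : Set (Euc N × Euc N)) :=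
        Set.prod_mono (subset_refl _) (subset_univ _)
      have hUC := hKset.uniformContinuousOn_of_continuous (hH1.mono hsub)
      rw [Metric.uniformContinuousOn_iff_le] at hUC
      obtain ⟨δ, hδpos, hδ⟩ := hUC ε hε
      have hevd := Metric.tendsto_nhds.1 hconv (min δ 1) (lt_min hδpos one_pos)
      rw [Filter.eventually_atTop] at hevd ⊢
      obtain ⟨M₀, hM₀⟩ := hevd
      refine ⟨M₀, fun m hm => ?_⟩
      have hdm := hM₀ m hm
      rw [Prod.dist_eq] at hdm
      have hdt : dist (tm m) t ≤ δ :=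
        ((le_max_left _ _).trans_lt (hdm.trans_le (min_le_left _ _))).le
      have hdx1 : dist (xm m) x ≤ 1 :=
        ((le_max_right _ _).trans_lt (hdm.trans_le (min_le_right _ _))).le
      have hdxδ : dist (xm m) x ≤ δ :=
        ((le_max_right _ _).trans_lt (hdm.trans_le (min_le_left _ _))).le
      have hm' : ∀ p : Euc N, ‖p‖ ≤ r → |H (tm m) (xm m) p - H t x p| ≤ ε := by
        intro p hp
        have hpmem : p ∈ Metric.closedBall (0:Euc N) r := by
          simpa [Metric.mem_closedBall, dist_zero_right] using hp
        have hmem1 : ((tm m, xm m, p) : ℝ × Euc N × Euc N) ∈ (Icc (0:ℝ) T) ×ˢ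
            ((Metric.closedBall x 1) ×ˢ (Metric.closedBall (0:Euc N) r)) :=
          ⟨htm m, ⟨hdx1, hpmem⟩⟩
        have hmem2 : ((t, x, p) : ℝ × Euc N × Euc N) ∈ (Icc (0:ℝ) T) ×ˢ
            ((Metric.closedBall x 1) ×ˢ (Metric.closedBall (0:Euc N) r)) :=
          ⟨ht, ⟨Metric.mem_closedBall_self zero_le_one, hpmem⟩⟩
        have hdist : dist ((tm m, xm m, p) : ℝ × Euc N × Euc N) ((t, x, p)) ≤ δ := by
          rw [Prod.dist_eq, Prod.dist_eq, dist_self]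
          exact max_le hdt (max_le hdxδ hδpos.le)
        have := hδ _ hmem1 _ hmem2 hdist
        rwa [Real.dist_eq] at this
      obtain ⟨w, hw1, hw2⟩ := key_construction (H (tm m) (xm m)) (H t x)
        (cont_p hH1 (htm m) (xm m)) (hH2 (tm m) (htm m) (xm m)) v K C₁ ε la r hε hε1 hKp
        hC₁' hla hr hm'
      refine ⟨w, hw1, ?_⟩
      rw [LFconj]
      exact iSup_le fun p => EReal.coe_le_coe_iff.2 (hw2 p)
    have main' : ∀ k : ℕ, ∃ M : ℕ, ∀ m, M ≤ m → ∃ w : Euc N,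
        ‖w - v‖ ≤ 1/(k+1) ∧ LFconj H (tm m) (xm m) w ≤ ((K + 1/(k+1) : ℝ) : EReal) := by
      intro k
      have hpos : (0:ℝ) < 1/(k+1) := by positivity
      have hle1 : (1:ℝ)/(k+1) ≤ 1 := by
        rw [div_le_one (by positivity)]
        exact le_add_of_nonneg_left (Nat.cast_nonneg k)
      exact Filter.eventually_atTop.1 (main _ hpos hle1)
    choose M hM using main'
    obtain ⟨ψ, hψ0, hψs⟩ : ∃ ψ : ℕ → ℕ, ψ 0 = M 0 ∧ ∀ k, ψ (k+1) = max (M (k+1)) (ψ k + 1) :=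
      ⟨fun k => Nat.rec (motive := fun _ => ℕ) (M 0) (fun k ih => max (M (k+1)) (ih + 1)) k,
        rfl, fun k => rfl⟩
    have hψM : ∀ k, M k ≤ ψ k := by
      intro k
      cases k with
      | zero => rw [hψ0]
      | succ k => rw [hψs]; exact le_max_left _ _
    have hψmono : StrictMono ψ := strictMono_nat_of_lt_succ fun k => by
      rw [hψs]; exact lt_of_lt_of_le (Nat.lt_succ_self _) (le_max_right _ _)
    set g : ℕ → ℕ := fun m => Nat.findGreatest (fun k => ψ k ≤ m) m with hgdef
    have hgspec : ∀ m, ψ 0 ≤ m → ψ (g m) ≤ m := by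
      intro m hm0
      exact Nat.findGreatest_spec (P := fun k => ψ k ≤ m) (Nat.zero_le m) hm0
    have hgge : ∀ k m, ψ k ≤ m → k ≤ g m := by
      intro k m hkm
      exact Nat.le_findGreatest (hψmono.le_apply.trans hkm) hkm
    have hgtop : Tendsto g atTop atTop :=
      Filter.tendsto_atTop_atTop.2 fun k => ⟨ψ k, fun m hm => hgge k m hm⟩
    have hsel : ∀ m : ℕ, ∃ w : Euc N, ψ 0 ≤ m →
        ‖w - v‖ ≤ 1/(g m+1) ∧ LFconj H (tm m) (xm m) w ≤ ((K + 1/(g m+1) : ℝ) : EReal) := by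
      intro m
      by_cases h : ψ 0 ≤ m
      · obtain ⟨w, hw⟩ := hM (g m) m (le_trans (hψM (g m)) (hgspec m h))
        exact ⟨w, fun _ => hw⟩
      · exact ⟨v, fun h' => absurd h' h⟩
    choose vm hvm using hsel
    have hgε : Tendsto (fun m => 1/((g m : ℝ)+1)) atTop (nhds 0) :=
      tendsto_one_div_add_atTop_nhds_zero_nat.comp hgtop
    have hvmto : Tendsto vm atTop (nhds v) := by
      rw [tendsto_iff_dist_tendsto_zero]
      apply squeeze_zero' (Filter.Eventually.of_forall fun m => dist_nonneg)
        ?_ hgε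
      filter_upwards [Filter.eventually_atTop.2 ⟨ψ 0, fun m hm => hm⟩] with m hm
      rw [dist_eq_norm]
      exact (hvm m hm).1
    refine ⟨vm, hvmto, ?_⟩
    rw [hK]
    refine tendsto_order.2 ⟨fun b hb => lsc_lower vm hvmto b (by rw [hK]; exact hb), ?_⟩
    intro b hb
    induction b with
    | bot => exact absurd hb (by simp)
    | coe b' =>
        have hKb : K < b' := by exact_mod_cast hb
        have htd : Tendsto (fun m => K + 1/((g m:ℝ)+1)) atTop (nhds K) := by
          simpa using tendsto_const_nhds.add hgε
        have hev := htd.eventually_lt_const hKb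
        filter_upwards [hev, Filter.eventually_atTop.2 ⟨ψ 0, fun m hm => hm⟩] with m hm1 hm2
        exact lt_of_le_of_lt ((hvm m hm2).2) (by exact_mod_cast hm1)
    | top =>
        filter_upwards [Filter.eventually_atTop.2 ⟨ψ 0, fun m hm => hm⟩] with m hm
        exact lt_of_le_of_lt ((hvm m hm).2) (EReal.coe_lt_top _)

lemma condL4 {T : ℝ} {H : ℝ → Euc N → Euc N → ℝ} (h3 : CondH3 T H) :
    CondL4 T (LFconj H) := by
  intro R hR
  obtain ⟨C, hC0, hC⟩ := h3 R hR
  refine ⟨C, hC0, fun t ht x hx v hv => ?_⟩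
  apply LFconj_top hC0 ?_ hv
  intro p
  have h := (abs_le.1 (hC t ht x hx p 0)).2
  rw [sub_zero] at h
  linarith

end ConjProof4
/-- **Proposition 2.1.** If `H` satisfies (H1)–(H2) then `L = H*` satisfies
(L1)–(L3); if moreover `H` satisfies (H3) then (L4) holds; and if `H` satisfies
(H4) with integrable `c`, then (L5) holds with that `c` off a measure zero set. -/
theorem conjugate_lagrangian_properties (T : ℝ) (hT : 0 < T) (N : ℕ)
    (H : ℝ → Euc N → Euc N → ℝ)
    (h1 : CondH1 T H) (h2 : CondH2 T H) :
    (CondL1 T (LFconj H) ∧ CondL2 T (LFconj H) ∧ CondL3 T (LFconj H)) ∧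
    (CondH3 T H → CondL4 T (LFconj H)) ∧
    (∀ c : ℝ → ℝ, IntegrableOn c (Icc 0 T) → (∀ t, 0 ≤ c t) →
      (∀ᵐ t ∂(volume.restrict (Icc (0:ℝ) T)), ∀ x p q : Euc N,
        |H t x p - H t x q| ≤ c t * (1 + ‖x‖) * ‖p - q‖) →
      ∃ 𝒩 : Set ℝ, volume 𝒩 = 0 ∧
        ∀ t ∈ Icc (0:ℝ) T \ 𝒩, ∀ x v : Euc N,
          c t * (1 + ‖x‖) < ‖v‖ → LFconj H t x v = ⊤) := by
  refine ⟨⟨ConjProof2.condL1 h1, fun t ht x => ⟨ConjProof2.econvex h2 ht x,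
    ConjProof2.eproper h1 h2 ht x⟩, ConjProof4.condL3 h1 h2⟩,
    fun h3 => ConjProof4.condL4 h3, ?_⟩
  intro c hint hc0 hae
  refine ⟨{s | ¬ ∀ x p q : Euc N, |H s x p - H s x q| ≤ c s * (1+‖x‖) * ‖p-q‖}
    ∩ Icc 0 T, ?_, ?_⟩
  · have h0' : (volume.restrict (Icc (0:ℝ) T))
        {s | ¬ ∀ x p q : Euc N, |H s x p - H s x q| ≤ c s * (1+‖x‖) * ‖p-q‖} = 0 := by
      have := MeasureTheory.ae_iff.1 hae
      simpa using this
    rw [MeasureTheory.Measure.restrict_apply' measurableSet_Icc] at h0'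
    exact h0'
  · intro t ht x v hv
    have hP : ∀ x p q : Euc N, |H t x p - H t x q| ≤ c t * (1+‖x‖) * ‖p-q‖ := by
      by_contra hcon
      exact ht.2 ⟨hcon, ht.1⟩
    apply ConjProof.LFconj_top (C := c t * (1+‖x‖))
      (mul_nonneg (hc0 t) (by positivity)) ?_ hv
    intro p
    have h := (abs_le.1 (hP x p 0)).2
    rw [sub_zero] at h
    linarith

end
end

section
/- Assume L : [0,T]×ℝ^N×ℝ^N → ℝ∪{±∞} satisfies (L1)–(L3) and define Q(t,x) := { (v,η) ∈ ℝ^N×ℝ : (v,−η) ∈ epi L(t,x,·) }. Then: (Q1) Q has nonempty, closed, convex values; (Q2) the set-valued map (t,x) ↦ Q(t,x) is lower semicontinuous (for each open O, { (t,x) : Q(t,x) ∩ O ≠ ∅ } is open); (Q3) the graph { (t,x,v,η) : (v,η) ∈ Q(t,x) } is closed. If additionally L satisfies (L4), then ‖dom L(t,x,·)‖ ≤ C_R for every t ∈ [0,T], |x| ≤ R and R ≥ 0. If additionally L satisfies (L5), then ‖dom L(t,x,·)‖ ≤ c(t)(1+|x|) for a.e. t ∈ [0,T] and every x ∈ ℝ^N.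 -/
open MeasureTheory Filter Set Topology
open scoped RealInnerProductSpace

noncomputable section

/-- **Corollary 2.2.** Properties (Q1)–(Q5) of the set-valued map `Q`. -/
theorem Qmap_properties (T : ℝ) (hT : 0 < T) (N : ℕ)
    (L : ℝ → Euc N → Euc N → EReal)
    (hL1 : CondL1 T L) (hL2 : CondL2 T L) (hL3 : CondL3 T L) :
    (∀ t ∈ Icc (0:ℝ) T, ∀ x : Euc N,
      (Qmap L t x).Nonempty ∧ IsClosed (Qmap L t x) ∧ Convex ℝ (Qmap L t x)) ∧
    (∀ t ∈ Icc (0:ℝ) T, ∀ x : Euc N, ∀ w ∈ Qmap L t x, ∀ O : Set (Euc N × ℝ),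
      IsOpen O → w ∈ O →
      ∀ᶠ q in nhdsWithin (t, x) (Icc (0:ℝ) T ×ˢ (univ : Set (Euc N))),
        (Qmap L q.1 q.2 ∩ O).Nonempty) ∧
    IsClosed { q : (ℝ × Euc N) × Euc N × ℝ |
      q.1.1 ∈ Icc (0:ℝ) T ∧ q.2 ∈ Qmap L q.1.1 q.1.2 } ∧
    (∀ R C : ℝ, 0 ≤ R → 0 ≤ C →
      (∀ t ∈ Icc (0:ℝ) T, ∀ x : Euc N, ‖x‖ ≤ R → ∀ v : Euc N, C < ‖v‖ → L t x v = ⊤) →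
      ∀ t ∈ Icc (0:ℝ) T, ∀ x : Euc N, ‖x‖ ≤ R → ∀ v ∈ edom (L t x), ‖v‖ ≤ C) ∧
    (∀ c : ℝ → ℝ, IntegrableOn c (Icc 0 T) → (∀ t, 0 ≤ c t) →
      (∀ᵐ t ∂(volume.restrict (Icc (0:ℝ) T)), ∀ x v : Euc N,
        c t * (1 + ‖x‖) < ‖v‖ → L t x v = ⊤) →
      ∀ᵐ t ∂(volume.restrict (Icc (0:ℝ) T)), ∀ x : Euc N, ∀ v ∈ edom (L t x),
        ‖v‖ ≤ c t * (1 + ‖x‖)) := by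
  -- (Q3) : closed graph
  have hQ3 : IsClosed { q : (ℝ × Euc N) × Euc N × ℝ |
      q.1.1 ∈ Icc (0:ℝ) T ∧ q.2 ∈ Qmap L q.1.1 q.1.2 } := by
    apply IsSeqClosed.isClosed
    intro u p hu hup
    have htm : ∀ m, (u m).1.1 ∈ Icc (0:ℝ) T := fun m => (hu m).1
    have htt : Tendsto (fun m => (u m).1.1) atTop (𝓝 p.1.1) :=
      ((continuous_fst.comp continuous_fst).tendsto p).comp hup
    have ht : p.1.1 ∈ Icc (0:ℝ) T := isClosed_Icc.mem_of_tendsto htt (.of_forall htm)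
    refine ⟨ht, ?_⟩
    by_contra hcon
    replace hcon : ((-p.2.2 : ℝ) : EReal) < L p.1.1 p.1.2 p.2.1 := lt_of_not_ge hcon
    obtain ⟨r, hr1, hr2⟩ := exists_between hcon
    have hz : ((p.1.1, (p.1.2, p.2.1)) : ℝ × Euc N × Euc N)
        ∈ Icc (0:ℝ) T ×ˢ (univ : Set (Euc N × Euc N)) := ⟨ht, trivial⟩
    have hlsc := hL1 _ hz r hr2
    set z : ℕ → ℝ × Euc N × Euc N := fun m => ((u m).1.1, ((u m).1.2, (u m).2.1)) with hzdef
    have hztend : Tendsto z atTop (𝓝 (p.1.1, (p.1.2, p.2.1))) := by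
      refine Tendsto.prodMk_nhds htt (Tendsto.prodMk_nhds ?_ ?_)
      · exact ((continuous_snd.comp continuous_fst).tendsto p).comp hup
      · exact ((continuous_fst.comp continuous_snd).tendsto p).comp hup
    have hzw : Tendsto z atTop (𝓝[Icc (0:ℝ) T ×ˢ (univ : Set (Euc N × Euc N))]
        (p.1.1, (p.1.2, p.2.1))) :=
      tendsto_nhdsWithin_of_tendsto_nhds_of_eventually_within z hztend
        (.of_forall fun m => ⟨htm m, trivial⟩)
    have hev : ∀ᶠ m in atTop, r < L (u m).1.1 (u m).1.2 (u m).2.1 := hzw.eventually hlsc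
    have hle : ∀ᶠ m in atTop, r ≤ ((-(u m).2.2 : ℝ) : EReal) :=
      hev.mono fun m hm => hm.le.trans (hu m).2
    have htend2 : Tendsto (fun m => ((-(u m).2.2 : ℝ) : EReal)) atTop (𝓝 ((-p.2.2 : ℝ) : EReal)) := by
      apply (continuous_coe_real_ereal.tendsto _).comp
      exact (((continuous_snd.comp continuous_snd).tendsto p).comp hup).neg
    exact absurd (ge_of_tendsto htend2 hle) (not_le.2 hr1)
  refine ⟨?_, ?_, hQ3, ?_, ?_⟩
  · -- (Q1)
    intro t ht x
    obtain ⟨hconv, hbot, v₀, hv₀⟩ := hL2 t ht x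
    refine ⟨⟨(v₀, -(L t x v₀).toReal), ?_⟩, ?_, ?_⟩
    · show L t x v₀ ≤ ((-(-(L t x v₀).toReal) : ℝ) : EReal)
      rw [neg_neg, EReal.coe_toReal hv₀ (hbot v₀)]
    · have : Qmap L t x = (fun ve : Euc N × ℝ => (((t, x) : ℝ × Euc N), ve)) ⁻¹'
          { q : (ℝ × Euc N) × Euc N × ℝ | q.1.1 ∈ Icc (0:ℝ) T ∧ q.2 ∈ Qmap L q.1.1 q.1.2 } := by
        ext ve
        simp only [mem_preimage, mem_setOf_eq]
        exact ⟨fun h => ⟨ht, h⟩, fun h => h.2⟩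
      rw [this]
      exact hQ3.preimage (Continuous.prodMk continuous_const continuous_id)
    · rintro ⟨v, η⟩ hv ⟨w, μ⟩ hw a b ha hb hab
      have hvt : L t x v ≠ ⊤ := (hv.trans_lt (EReal.coe_lt_top _)).ne
      have hwt : L t x w ≠ ⊤ := (hw.trans_lt (EReal.coe_lt_top _)).ne
      have hvr : L t x v = ((L t x v).toReal : EReal) := (EReal.coe_toReal hvt (hbot v)).symm
      have hwr : L t x w = ((L t x w).toReal : EReal) := (EReal.coe_toReal hwt (hbot w)).symm
      have hvle : (L t x v).toReal ≤ -η := by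
        rw [← EReal.coe_le_coe_iff, ← hvr]; exact hv
      have hwle : (L t x w).toReal ≤ -μ := by
        rw [← EReal.coe_le_coe_iff, ← hwr]; exact hw
      show L t x (a • (v, η) + b • (w, μ)).1 ≤ ((-(a • (v, η) + b • (w, μ)).2 : ℝ) : EReal)
      have h1 : (a • ((v, η) : Euc N × ℝ) + b • (w, μ)).1 = a • v + b • w := rfl
      have h2 : (a • ((v, η) : Euc N × ℝ) + b • (w, μ)).2 = a * η + b * μ := rfl
      rw [h1, h2]
      calc L t x (a • v + b • w) ≤ (a : EReal) * L t x v + (b : EReal) * L t x w :=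
              hconv v w a b ha hb hab
        _ = ((a * (L t x v).toReal + b * (L t x w).toReal : ℝ) : EReal) := by
              rw [EReal.coe_add, EReal.coe_mul, EReal.coe_mul, ← hvr, ← hwr]
        _ ≤ ((-(a * η + b * μ) : ℝ) : EReal) := by
              rw [EReal.coe_le_coe_iff]
              nlinarith [mul_le_mul_of_nonneg_left hvle ha, mul_le_mul_of_nonneg_left hwle hb]
  · -- (Q2)
    intro t ht x w hw O hO hwO
    by_contra hcon
    rw [Filter.not_eventually] at hcon
    have hclos : (t, x) ∈ closure { q : ℝ × Euc N |
        (q ∈ Icc (0:ℝ) T ×ˢ (univ : Set (Euc N))) ∧ ¬(Qmap L q.1 q.2 ∩ O).Nonempty } := by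
      rw [mem_closure_iff_frequently]
      exact (frequently_nhdsWithin_iff.mp hcon).mono fun q hq => ⟨hq.2, hq.1⟩
    obtain ⟨u, hu, hul⟩ := mem_closure_iff_seq_limit.mp hclos
    obtain ⟨hconv, hbot, -⟩ := hL2 t ht x
    have hwt : L t x w.1 ≠ ⊤ := (hw.trans_lt (EReal.coe_lt_top _)).ne
    set r : ℝ := (L t x w.1).toReal with hrdef
    have hwr : L t x w.1 = (r : EReal) := (EReal.coe_toReal hwt (hbot w.1)).symm
    have hrle : r ≤ -w.2 := by rw [← EReal.coe_le_coe_iff, ← hwr]; exact hw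
    obtain ⟨vm, hvm, hvL⟩ := hL3 t ht x w.1 (fun m => (u m).1) (fun m => (u m).2)
      (fun m => (hu m).1.1) (by simpa using hul)
    rw [hwr] at hvL
    have hfin : ∀ᶠ m in atTop, L (u m).1 (u m).2 (vm m) ≠ ⊤ ∧ L (u m).1 (u m).2 (vm m) ≠ ⊥ := by
      filter_upwards [hvL.eventually_lt_const (show (r : EReal) < ((r + 1 : ℝ) : EReal) by
          exact_mod_cast lt_add_one r),
        hvL.eventually_const_lt (show ((r - 1 : ℝ) : EReal) < (r : EReal) by
          exact_mod_cast sub_one_lt r)] with m h1 h2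
      exact ⟨(h1.trans (EReal.coe_lt_top _)).ne, (lt_of_le_of_lt bot_le h2).ne'⟩
    have hℓ : Tendsto (fun m => (L (u m).1 (u m).2 (vm m)).toReal) atTop (𝓝 r) := by
      have := (EReal.tendsto_toReal (show (r : EReal) ≠ ⊤ from EReal.coe_ne_top r)
        (EReal.coe_ne_bot r)).comp hvL
      exact this
    set ηm : ℕ → ℝ := fun m => min w.2 (-(L (u m).1 (u m).2 (vm m)).toReal) with hηdef
    have hηm : Tendsto ηm atTop (𝓝 w.2) := by
      have : Tendsto ηm atTop (𝓝 (min w.2 (-r))) := (tendsto_const_nhds.min hℓ.neg)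
      rwa [min_eq_left (by linarith)] at this
    have hin : ∀ᶠ m in atTop, (vm m, ηm m) ∈ O :=
      (hvm.prodMk_nhds hηm).eventually (hO.mem_nhds (by simpa using hwO))
    have hmem : ∀ᶠ m in atTop, (vm m, ηm m) ∈ Qmap L (u m).1 (u m).2 := by
      filter_upwards [hfin] with m ⟨h1, h2⟩
      show L (u m).1 (u m).2 (vm m) ≤ ((-(ηm m) : ℝ) : EReal)
      rw [← EReal.coe_toReal h1 h2, EReal.coe_le_coe_iff]
      have : ηm m ≤ -(L (u m).1 (u m).2 (vm m)).toReal := min_le_right _ _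
      linarith
    obtain ⟨m, h1, h2⟩ := (hin.and hmem).exists
    exact (hu m).2 ⟨(vm m, ηm m), h2, h1⟩
  · -- (Q4)
    intro R C hR hC h t ht x hx v hv
    by_contra hlt
    exact hv.1 (h t ht x hx v (lt_of_not_ge hlt))
  · -- (Q5)
    intro c hc hc0 h
    filter_upwards [h] with t ht x v hv
    by_contra hlt
    exact hv.1 (ht x v (lt_of_not_ge hlt))

end
end

section
/- Assume H : [0,T]×ℝ^N×ℝ^N → ℝ satisfies (H1)–(H4), let L(t,x,·) = H*(t,x,·) (equivalently L satisfies (L1)–(L5) and H(t,x,·) = L*(t,x,·)), and let Q(t,x) := { (v,η) ∈ ℝ^N×ℝ : (v,−η) ∈ epi L(t,x,·) }. Then the following three conditions are equivalent: (H5); (L6); and (Q6): for every R ≥ 0 there exists an integrable k_R : [0,T] → [0,∞) such that Q(t,x) ⊆ Q(t,y) + k_R(t)|x − y|(𝔹×[−1,1]) for a.e. t ∈ [0,T] and all |x|,|y| ≤ R, where 𝔹 is the closed unit ball of ℝ^N. -/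
open MeasureTheory Filter Set Topology
open scoped RealInnerProductSpace

noncomputable section

namespace Thm23

/-- Lipschitz bound implies continuity. -/
lemma cont_of_lip {n : ℕ} (g : Euc n → ℝ) (C : ℝ)
    (h : ∀ p q, |g p - g q| ≤ C * ‖p - q‖) : Continuous g := by
  have : LipschitzWith (Real.toNNReal C) g := by
    refine LipschitzWith.of_dist_le_mul fun p q => ?_
    rw [Real.dist_eq, dist_eq_norm]
    calc |g p - g q| ≤ C * ‖p - q‖ := h p q
      _ ≤ Real.toNNReal C * ‖p - q‖ := by
          apply mul_le_mul_of_nonneg_right _ (norm_nonneg _)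
          rw [Real.coe_toNNReal']; exact le_max_left _ _
  exact this.continuous

/-- Existence of subgradients for continuous convex functions on `ℝ^n`. -/
lemma exists_subgrad {n : ℕ} (g : Euc n → ℝ) (hconv : ConvexOn ℝ univ g)
    (hcont : Continuous g) (p : Euc n) :
    ∃ v : Euc n, ∀ q : Euc n, ⟪v, q⟫ - g q ≤ ⟪v, p⟫ - g p := by
  set s : Set (Euc n × ℝ) := {qr : Euc n × ℝ | g qr.1 < qr.2} with hs
  have hsopen : IsOpen s := isOpen_lt (hcont.comp continuous_fst) continuous_snd
  have hsconv : Convex ℝ s := by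
    intro a ha b hb α β hα hβ hαβ
    simp only [hs, mem_setOf_eq] at ha hb ⊢
    have h1 := hconv.2 (mem_univ a.1) (mem_univ b.1) hα hβ hαβ
    have key : α * g a.1 + β * g b.1 < α * a.2 + β * b.2 := by
      rcases eq_or_lt_of_le hα with h | h
      · have hβ1 : β = 1 := by linarith
        simp [← h, hβ1, hb]
      · rcases eq_or_lt_of_le hβ with h' | h'
        · have hα1 : α = 1 := by linarith
          simp [← h', hα1, ha]
        · have := mul_lt_mul_of_pos_left ha h
          have := mul_lt_mul_of_pos_left hb h'
          linarith
    calc g (α • a.1 + β • b.1) ≤ α * g a.1 + β * g b.1 := by simpa using h1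
      _ < α * a.2 + β * b.2 := key
      _ = (α • a + β • b).2 := rfl
  have hx : ((p, g p) : Euc n × ℝ) ∉ s := by simp [hs]
  obtain ⟨f, hf⟩ := geometric_hahn_banach_open_point hsconv hsopen hx
  set c : ℝ := f (0, 1) with hc
  have hdecomp : ∀ (q : Euc n) (r : ℝ), f (q, r) = f (q, 0) + r * c := by
    intro q r
    have he : ((q, r) : Euc n × ℝ) = (q, 0) + r • ((0 : Euc n), (1:ℝ)) := by
      simp [Prod.ext_iff]
    rw [he, map_add, f.map_smul, smul_eq_mul, hc]
  have hkey : ∀ (q : Euc n) (r : ℝ), g q < r → f (q, 0) + r * c < f (p, 0) + g p * c := by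
    intro q r h
    have := hf (q, r) h
    rwa [hdecomp q r, hdecomp p (g p)] at this
  have hcneg : c < 0 := by
    have := hkey p (g p + 1) (by linarith)
    nlinarith
  have hmain : ∀ q : Euc n, f (q, 0) + g q * c ≤ f (p, 0) + g p * c := by
    intro q
    by_contra hlt
    push_neg at hlt
    set A := f (q, 0) + g q * c with hA
    set B := f (p, 0) + g p * c with hB
    set δ : ℝ := (A - B) / (-c) with hδ
    have hδpos : 0 < δ := div_pos (by linarith) (by linarith)
    have h1 := hkey q (g q + δ) (by linarith)
    have h2 : (A - B) / (-c) * (-c) = A - B := div_mul_cancel₀ _ (by linarith : (-c) ≠ 0)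
    have h3 : δ * c = B - A := by rw [hδ]; linear_combination (-1 : ℝ) * h2
    have h4 : f (q, 0) + (g q + δ) * c = A + δ * c := by rw [hA]; ring
    rw [h4, h3] at h1
    linarith
  set P : Euc n := (InnerProductSpace.toDual ℝ (Euc n)).symm
      (f.comp (ContinuousLinearMap.inl ℝ (Euc n) ℝ)) with hP
  have hPapp : ∀ q : Euc n, ⟪P, q⟫ = f (q, 0) := by
    intro q
    rw [hP, InnerProductSpace.toDual_symm_apply]
    rfl
  refine ⟨(-c)⁻¹ • P, fun q => ?_⟩
  rw [real_inner_smul_left, real_inner_smul_left, hPapp, hPapp]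
  have hcne : c ≠ 0 := hcneg.ne
  have hinv : (-c)⁻¹ * (-c) = 1 := inv_mul_cancel₀ (by linarith)
  have e1 : ∀ A B : ℝ, (-c)⁻¹ * (A + B * c) = (-c)⁻¹ * A - B := by
    intro A B
    linear_combination (-B : ℝ) * hinv
  calc (-c)⁻¹ * f (q, 0) - g q = (-c)⁻¹ * (f (q, 0) + g q * c) := (e1 _ _).symm
    _ ≤ (-c)⁻¹ * (f (p, 0) + g p * c) :=
        mul_le_mul_of_nonneg_left (hmain q) (inv_nonneg.2 (by linarith))
    _ = (-c)⁻¹ * f (p, 0) - g p := e1 _ _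

lemma lfconj_fenchel {n : ℕ} (H : ℝ → Euc n → Euc n → ℝ) (t : ℝ) (x v p : Euc n) :
    ((⟪v, p⟫ - H t x p : ℝ) : EReal) ≤ LFconj H t x v := by
  unfold LFconj
  exact le_iSup (fun r : Euc n => ((⟪v, r⟫ - H t x r : ℝ) : EReal)) p

lemma lfconj_ne_bot {n : ℕ} (H : ℝ → Euc n → Euc n → ℝ) (t : ℝ) (x v : Euc n) :
    LFconj H t x v ≠ ⊥ := by
  intro h
  have := lfconj_fenchel H t x v 0
  rw [h, le_bot_iff] at this
  exact EReal.coe_ne_bot _ this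

lemma lfconj_of_subgrad {n : ℕ} (H : ℝ → Euc n → Euc n → ℝ) (t : ℝ) (x : Euc n)
    (p v : Euc n) (hs : ∀ q, ⟪v, q⟫ - H t x q ≤ ⟪v, p⟫ - H t x p) :
    LFconj H t x v = ((⟪v, p⟫ - H t x p : ℝ) : EReal) := by
  refine le_antisymm ?_ (lfconj_fenchel H t x v p)
  unfold LFconj
  exact iSup_le fun q => EReal.coe_le_coe_iff.2 (hs q)

lemma mem_qmap_iff {n : ℕ} (H : ℝ → Euc n → Euc n → ℝ) (t : ℝ) (x : Euc n)
    (ve : Euc n × ℝ) :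
    ve ∈ Qmap (LFconj H) t x ↔ ∀ p : Euc n, ⟪ve.1, p⟫ + ve.2 ≤ H t x p := by
  simp only [Qmap, mem_setOf_eq, LFconj, iSup_le_iff, EReal.coe_le_coe_iff]
  constructor <;> intro h p <;> have := h p <;> linarith

lemma qmap_closed {n : ℕ} (H : ℝ → Euc n → Euc n → ℝ) (t : ℝ) (x : Euc n) :
    IsClosed (Qmap (LFconj H) t x) := by
  have : Qmap (LFconj H) t x
      = ⋂ p : Euc n, {ve : Euc n × ℝ | ⟪ve.1, p⟫ + ve.2 ≤ H t x p} := by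
    ext ve; simp [mem_qmap_iff]
  rw [this]
  refine isClosed_iInter fun p => isClosed_le ?_ continuous_const
  exact (continuous_fst.inner continuous_const).add continuous_snd

lemma qmap_convex {n : ℕ} (H : ℝ → Euc n → Euc n → ℝ) (t : ℝ) (x : Euc n) :
    Convex ℝ (Qmap (LFconj H) t x) := by
  have : Qmap (LFconj H) t x
      = ⋂ p : Euc n, {ve : Euc n × ℝ | ⟪ve.1, p⟫ + ve.2 ≤ H t x p} := by
    ext ve; simp [mem_qmap_iff]
  rw [this]
  refine convex_iInter fun p => convex_halfSpace_le ?_ (H t x p)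
  constructor
  · intro a b
    show ⟪a.1 + b.1, p⟫ + (a.2 + b.2) = (⟪a.1, p⟫ + a.2) + (⟪b.1, p⟫ + b.2)
    rw [inner_add_left]; ring
  · intro m a
    show ⟪m • a.1, p⟫ + m * a.2 = m * (⟪a.1, p⟫ + a.2)
    rw [real_inner_smul_left]; ring

lemma decomp {n : ℕ} (f : Euc n × ℝ →L[ℝ] ℝ) :
    ∃ P : Euc n, ∀ (q : Euc n) (r : ℝ), f (q, r) = ⟪P, q⟫ + r * f (0, 1) := by
  refine ⟨(InnerProductSpace.toDual ℝ (Euc n)).symm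
      (f.comp (ContinuousLinearMap.inl ℝ (Euc n) ℝ)), fun q r => ?_⟩
  rw [InnerProductSpace.toDual_symm_apply]
  have he : ((q, r) : Euc n × ℝ) = (q, 0) + r • ((0 : Euc n), (1:ℝ)) := by
    simp [Prod.ext_iff]
  rw [he, map_add, f.map_smul, smul_eq_mul]
  rfl

lemma step_Q6_to_L6 {n : ℕ} (H : ℝ → Euc n → Euc n → ℝ) (t : ℝ) (x y : Euc n) (ε : ℝ)
    (h : ∀ w ∈ Qmap (LFconj H) t x, ∃ z ∈ Qmap (LFconj H) t y,
      ‖w.1 - z.1‖ ≤ ε ∧ |w.2 - z.2| ≤ ε) :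
    ∀ v ∈ edom (LFconj H t x), ∃ w ∈ edom (LFconj H t y),
      ‖w - v‖ ≤ ε ∧ LFconj H t y w ≤ LFconj H t x v + (ε : EReal) := by
  intro v hv
  obtain ⟨hvt, hvb⟩ := hv
  set r : ℝ := (LFconj H t x v).toReal with hr
  have hvr : LFconj H t x v = (r : EReal) := (EReal.coe_toReal hvt hvb).symm
  have hmem : ((v, -r) : Euc n × ℝ) ∈ Qmap (LFconj H) t x := by
    show LFconj H t x v ≤ ((-(-r) : ℝ) : EReal)
    rw [hvr, neg_neg]
  obtain ⟨z, hz, h1, h2⟩ := h (v, -r) hmem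
  have hzq : LFconj H t y z.1 ≤ ((-z.2 : ℝ) : EReal) := hz
  refine ⟨z.1, ⟨ne_top_of_le_ne_top (EReal.coe_ne_top _) hzq, lfconj_ne_bot H t y z.1⟩, ?_, ?_⟩
  · rw [norm_sub_rev]; exact h1
  · have hb : -z.2 ≤ r + ε := by
      have h3 := (abs_le.1 h2).1
      have h4 := (abs_le.1 h2).2
      simp only at h3 h4
      linarith
    calc LFconj H t y z.1 ≤ ((-z.2 : ℝ) : EReal) := hzq
      _ ≤ ((r + ε : ℝ) : EReal) := EReal.coe_le_coe_iff.2 hb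
      _ = LFconj H t x v + (ε : EReal) := by rw [hvr, EReal.coe_add]

lemma step_L6_to_Q6 {n : ℕ} (H : ℝ → Euc n → Euc n → ℝ) (t : ℝ) (x y : Euc n) (ε : ℝ)
    (hε : 0 ≤ ε)
    (h : ∀ v ∈ edom (LFconj H t x), ∃ w ∈ edom (LFconj H t y),
      ‖w - v‖ ≤ ε ∧ LFconj H t y w ≤ LFconj H t x v + (ε : EReal)) :
    ∀ w ∈ Qmap (LFconj H) t x, ∃ z ∈ Qmap (LFconj H) t y,
      ‖w.1 - z.1‖ ≤ ε ∧ |w.2 - z.2| ≤ ε := by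
  intro w hw
  have hwq : LFconj H t x w.1 ≤ ((-w.2 : ℝ) : EReal) := hw
  have hdom : w.1 ∈ edom (LFconj H t x) :=
    ⟨ne_top_of_le_ne_top (EReal.coe_ne_top _) hwq, lfconj_ne_bot H t x w.1⟩
  obtain ⟨u, hu, h1, h2⟩ := h w.1 hdom
  refine ⟨(u, w.2 - ε), ?_, ?_, ?_⟩
  · show LFconj H t y u ≤ ((-(w.2 - ε) : ℝ) : EReal)
    have e : -w.2 + ε = -(w.2 - ε) := by ring
    calc LFconj H t y u ≤ LFconj H t x w.1 + (ε : EReal) := h2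
      _ ≤ ((-w.2 : ℝ) : EReal) + (ε : EReal) := add_le_add_left hwq _
      _ = ((-(w.2 - ε) : ℝ) : EReal) := by rw [← EReal.coe_add, e]
  · rw [norm_sub_rev]; exact h1
  · show |w.2 - (w.2 - ε)| ≤ ε
    have e : w.2 - (w.2 - ε) = ε := by ring
    rw [e, abs_of_nonneg hε]

lemma step_L6_to_H5 {n : ℕ} (H : ℝ → Euc n → Euc n → ℝ) (t : ℝ) (x y p : Euc n)
    (hconv : ConvexOn ℝ univ (H t x)) (hcont : Continuous (H t x)) (ε : ℝ)
    (h : ∀ v ∈ edom (LFconj H t x), ∃ w ∈ edom (LFconj H t y),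
      ‖w - v‖ ≤ ε ∧ LFconj H t y w ≤ LFconj H t x v + (ε : EReal)) :
    H t x p - H t y p ≤ ε * (1 + ‖p‖) := by
  obtain ⟨v₀, hv₀⟩ := exists_subgrad (H t x) hconv hcont p
  have hval : LFconj H t x v₀ = ((⟪v₀, p⟫ - H t x p : ℝ) : EReal) :=
    lfconj_of_subgrad H t x p v₀ hv₀
  have hdom : v₀ ∈ edom (LFconj H t x) := by
    rw [edom, mem_setOf_eq, hval]
    exact ⟨EReal.coe_ne_top _, EReal.coe_ne_bot _⟩
  obtain ⟨w, hw, h1, h2⟩ := h v₀ hdom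
  set ρ : ℝ := (LFconj H t y w).toReal with hρ
  have hwr : LFconj H t y w = (ρ : EReal) := (EReal.coe_toReal hw.1 hw.2).symm
  have h2' : ρ ≤ ⟪v₀, p⟫ - H t x p + ε := by
    rw [hwr, hval, ← EReal.coe_add] at h2
    exact EReal.coe_le_coe_iff.1 h2
  have hf : ⟪w, p⟫ - H t y p ≤ ρ := by
    have h3 := lfconj_fenchel H t y w p
    rw [hwr] at h3
    exact EReal.coe_le_coe_iff.1 h3
  have hip : -(ε * ‖p‖) ≤ ⟪w - v₀, p⟫ := by
    have habs := abs_real_inner_le_norm (w - v₀) p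
    have hm : ‖w - v₀‖ * ‖p‖ ≤ ε * ‖p‖ := mul_le_mul_of_nonneg_right h1 (norm_nonneg _)
    have hn := neg_abs_le ⟪w - v₀, p⟫
    linarith
  have hsub : ⟪w, p⟫ - ⟪v₀, p⟫ = ⟪w - v₀, p⟫ := (inner_sub_left _ _ _).symm
  have e : ε * (1 + ‖p‖) = ε + ε * ‖p‖ := by ring
  linarith

lemma step_H5_to_Q6 {n : ℕ} (H : ℝ → Euc n → Euc n → ℝ) (t : ℝ) (x y : Euc n)
    (hcy : ConvexOn ℝ univ (H t y)) (hcontY : Continuous (H t y))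
    (ε : ℝ) (hε : 0 ≤ ε)
    (h5 : ∀ p : Euc n, |H t x p - H t y p| ≤ ε * (1 + ‖p‖)) :
    ∀ w ∈ Qmap (LFconj H) t x, ∃ z ∈ Qmap (LFconj H) t y,
      ‖w.1 - z.1‖ ≤ ε ∧ |w.2 - z.2| ≤ ε := by
  classical
  intro w hw
  by_contra hcon
  push_neg at hcon
  set K : Set (Euc n × ℝ) := Metric.closedBall w.1 ε ×ˢ Icc (w.2 - ε) (w.2 + ε) with hK
  have hdisj : Disjoint K (Qmap (LFconj H) t y) := by
    rw [Set.disjoint_left]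
    rintro a ⟨ha1, ha2⟩ haQ
    have hA : ‖w.1 - a.1‖ ≤ ε := by
      rw [norm_sub_rev, ← dist_eq_norm]
      exact Metric.mem_closedBall.1 ha1
    have hB : |w.2 - a.2| ≤ ε := by
      rw [abs_le]
      exact ⟨by linarith [ha2.2], by linarith [ha2.1]⟩
    exact absurd hB (not_le.2 (hcon a haQ hA))
  have hKc : IsCompact K := (isCompact_closedBall _ _).prod isCompact_Icc
  have hKconv : Convex ℝ K := (convex_closedBall _ _).prod (convex_Icc _ _)
  obtain ⟨f, u, u', hfK, huu, hfQ⟩ :=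
    geometric_hahn_banach_compact_closed hKconv hKc (qmap_convex H t y) (qmap_closed H t y)
      hdisj
  obtain ⟨P, hPf⟩ := decomp f
  set c : ℝ := f (0, 1) with hc
  obtain ⟨w₀, hw₀⟩ := exists_subgrad (H t y) hcy hcontY 0
  have hQpt : ∀ ζ : ℝ, ζ ≤ H t y 0 → ((w₀, ζ) : Euc n × ℝ) ∈ Qmap (LFconj H) t y := by
    intro ζ hζ
    show LFconj H t y w₀ ≤ ((-ζ : ℝ) : EReal)
    rw [lfconj_of_subgrad H t y 0 w₀ hw₀]
    apply EReal.coe_le_coe_iff.2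
    rw [inner_zero_right]
    linarith
  have hcle : c ≤ 0 := by
    by_contra hpos
    push_neg at hpos
    set ζ : ℝ := min (H t y 0) ((u' - ⟪P, w₀⟫ - 1) / c) with hζ
    have h1 := hfQ _ (hQpt ζ (min_le_left _ _))
    rw [hPf] at h1
    have h2 : ζ * c ≤ u' - ⟪P, w₀⟫ - 1 := by
      have hm := min_le_right (H t y 0) ((u' - ⟪P, w₀⟫ - 1) / c)
      calc ζ * c ≤ ((u' - ⟪P, w₀⟫ - 1) / c) * c := mul_le_mul_of_nonneg_right hm hpos.le
        _ = u' - ⟪P, w₀⟫ - 1 := div_mul_cancel₀ _ hpos.ne'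
    linarith
  set u₁ : Euc n := if P = 0 then 0 else ‖P‖⁻¹ • P with hu₁
  have hu₁n : ‖u₁‖ ≤ 1 := by
    rw [hu₁]; split_ifs with h
    · simp
    · rw [norm_smul, norm_inv, norm_norm, inv_mul_cancel₀ (norm_ne_zero_iff.2 h)]
  have hPu₁ : ⟪P, u₁⟫ = ‖P‖ := by
    rw [hu₁]; split_ifs with h
    · simp [h]
    · rw [real_inner_smul_right, real_inner_self_eq_norm_sq]
      have hne : ‖P‖ ≠ 0 := norm_ne_zero_iff.2 h
      field_simp
  have hstar : ⟪P, w.1⟫ + ε * ‖P‖ + (w.2 - ε) * c < u := by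
    have hmem : ((w.1 + ε • u₁, w.2 - ε) : Euc n × ℝ) ∈ K := by
      constructor
      · rw [Metric.mem_closedBall, dist_eq_norm]
        simp only [add_sub_cancel_left]
        rw [norm_smul, Real.norm_eq_abs, abs_of_nonneg hε]
        calc ε * ‖u₁‖ ≤ ε * 1 := mul_le_mul_of_nonneg_left hu₁n hε
          _ = ε := mul_one ε
      · exact ⟨by simp, by simp; linarith⟩
    have h1 := hfK _ hmem
    rw [hPf, inner_add_right, real_inner_smul_right, hPu₁] at h1
    linarith
  have hwq : LFconj H t x w.1 ≤ ((-w.2 : ℝ) : EReal) := hw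
  have hFen : ∀ r : Euc n, ⟪w.1, r⟫ + w.2 ≤ H t x r := by
    intro r
    have h1 := le_trans (lfconj_fenchel H t x w.1 r) hwq
    have h2 := EReal.coe_le_coe_iff.1 h1
    linarith
  rcases eq_or_lt_of_le hcle with hc0 | hcneg
  · -- case c = 0
    have hc0' : c = 0 := hc0
    have hP0 : P ≠ 0 := by
      intro h0
      have h1 := hstar
      have h2 := hfQ _ (hQpt (H t y 0) le_rfl)
      rw [hPf] at h2
      rw [h0] at h1 h2
      simp only [inner_zero_left, norm_zero, mul_zero, zero_add, add_zero] at h1 h2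
      rw [hc0'] at h1 h2
      simp only [mul_zero, add_zero, zero_add] at h1 h2
      linarith
    have hδ : 0 < u' - ⟪P, w.1⟫ - ε * ‖P‖ := by
      have h1 := hstar
      rw [hc0'] at h1
      simp only [mul_zero, add_zero] at h1
      linarith
    set X : ℝ := |H t y 0 + ε - w.2| + 1 with hX
    set m : ℝ := X / (u' - ⟪P, w.1⟫ - ε * ‖P‖) with hm
    have hmpos : 0 < m := div_pos (by positivity) hδ
    set r : Euc n := (-m) • P with hrdef
    obtain ⟨w₁, hw₁⟩ := exists_subgrad (H t y) hcy hcontY r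
    have hmemQ : ((w₁, -(⟪w₁, r⟫ - H t y r)) : Euc n × ℝ) ∈ Qmap (LFconj H) t y := by
      show LFconj H t y w₁ ≤ ((-(-(⟪w₁, r⟫ - H t y r)) : ℝ) : EReal)
      rw [lfconj_of_subgrad H t y r w₁ hw₁, neg_neg]
    have h1 := hfQ _ hmemQ
    rw [hPf, hc0'] at h1
    have h1' : u' < ⟪P, w₁⟫ := by linarith [h1]
    have hsub0 := hw₁ 0
    rw [inner_zero_right] at hsub0
    have hFr := hFen r
    have h5r := (abs_le.1 (h5 r)).2
    have hrP : ⟪w₁, r⟫ = -(m * ⟪P, w₁⟫) := by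
      rw [hrdef, real_inner_smul_right, real_inner_comm]; ring
    have hrw : ⟪w.1, r⟫ = -(m * ⟪P, w.1⟫) := by
      rw [hrdef, real_inner_smul_right, real_inner_comm]; ring
    have hrn : ‖r‖ = m * ‖P‖ := by
      rw [hrdef, norm_smul, Real.norm_eq_abs, abs_neg, abs_of_pos hmpos]
    have e2 : ε * (1 + ‖r‖) = ε + m * ε * ‖P‖ := by rw [hrn]; ring
    have e4 : m * u' < m * ⟪P, w₁⟫ := mul_lt_mul_of_pos_left h1' hmpos
    rw [hrw] at hFr
    rw [hrP] at hsub0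
    have key : m * (u' - ⟪P, w.1⟫ - ε * ‖P‖) < H t y 0 + ε - w.2 := by nlinarith
    have hmd : m * (u' - ⟪P, w.1⟫ - ε * ‖P‖) = X := div_mul_cancel₀ _ hδ.ne'
    have hle := le_abs_self (H t y 0 + ε - w.2)
    rw [hmd] at key
    rw [hX] at key
    linarith
  · -- case c < 0
    set s : ℝ := -c with hsdef
    have hspos : 0 < s := by rw [hsdef]; linarith
    have hceq : c = -s := by rw [hsdef]; ring
    set r : Euc n := s⁻¹ • (-P) with hrdef
    have hsr : s • r = -P := by
      rw [hrdef, smul_smul, mul_inv_cancel₀ hspos.ne', one_smul]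
    obtain ⟨w₁, hw₁⟩ := exists_subgrad (H t y) hcy hcontY r
    have hmemQ : ((w₁, -(⟪w₁, r⟫ - H t y r)) : Euc n × ℝ) ∈ Qmap (LFconj H) t y := by
      show LFconj H t y w₁ ≤ ((-(-(⟪w₁, r⟫ - H t y r)) : ℝ) : EReal)
      rw [lfconj_of_subgrad H t y r w₁ hw₁, neg_neg]
    have h1 := hfQ _ hmemQ
    rw [hPf, hceq] at h1
    have hcr : s * ⟪w₁, r⟫ = -⟪P, w₁⟫ := by
      rw [← real_inner_smul_right, hsr, inner_neg_right, real_inner_comm]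
    have hsw : s * ⟪w.1, r⟫ = -⟪P, w.1⟫ := by
      rw [← real_inner_smul_right, hsr, inner_neg_right, real_inner_comm]
    have hsn : s * ‖r‖ = ‖P‖ := by
      have h2 : ‖(s • r : Euc n)‖ = s * ‖r‖ := by
        rw [norm_smul, Real.norm_eq_abs, abs_of_pos hspos]
      rw [← h2, hsr, norm_neg]
    have hFr := hFen r
    have hFrS := mul_le_mul_of_nonneg_left hFr hspos.le
    have h5rS := mul_le_mul_of_nonneg_left ((abs_le.1 (h5 r)).2) hspos.le
    have e5 : s * (ε * (1 + ‖r‖)) = ε * s + ε * ‖P‖ := by rw [← hsn]; ring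
    rw [hceq] at hstar
    nlinarith [h1, hstar, hFrS, h5rS, hcr, hsw, e5, huu]

end Thm23

/-- **Theorem 2.3.** Under (H1)–(H4), with `L = H*`, the conditions (H5), (L6)
and (Q6) are equivalent. -/
theorem H5_iff_L6_iff_Q6 (T : ℝ) (hT : 0 < T) (N : ℕ)
    (H : ℝ → Euc N → Euc N → ℝ)
    (h1 : CondH1 T H) (h2 : CondH2 T H) (h3 : CondH3 T H) (h4 : CondH4 T H) :
    (CondH5 T H ↔ CondL6 T (LFconj H)) ∧
    (CondL6 T (LFconj H) ↔ CondQ6 T (LFconj H)) := by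
  have contH : ∀ t ∈ Icc (0:ℝ) T, ∀ x : Euc N, Continuous (H t x) := by
    intro t ht x
    obtain ⟨C, hC0, hC⟩ := h3 ‖x‖ (norm_nonneg x)
    exact Thm23.cont_of_lip (H t x) C (hC t ht x le_rfl)
  have hH5Q6 : CondH5 T H → CondQ6 T (LFconj H) := by
    intro h5 R hR
    obtain ⟨k, hki, hk0, hae⟩ := h5 R hR
    refine ⟨k, hki, hk0, ?_⟩
    filter_upwards [hae, ae_restrict_mem measurableSet_Icc] with t ht htI
    intro x y hx hy w hw
    refine Thm23.step_H5_to_Q6 H t x y (h2 t htI y) (contH t htI y)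
      (k t * ‖x - y‖) (mul_nonneg (hk0 t) (norm_nonneg _)) ?_ w hw
    intro p
    calc |H t x p - H t y p| ≤ k t * (1 + ‖p‖) * ‖x - y‖ := ht x y p hx hy
      _ = k t * ‖x - y‖ * (1 + ‖p‖) := by ring
  have hQ6L6 : CondQ6 T (LFconj H) → CondL6 T (LFconj H) := by
    intro h R hR
    obtain ⟨k, hki, hk0, hae⟩ := h R hR
    refine ⟨k, hki, hk0, ?_⟩
    filter_upwards [hae] with t ht
    intro x y hx hy v hv
    obtain ⟨w, hw, h1, h2⟩ :=
      Thm23.step_Q6_to_L6 H t x y (k t * ‖x - y‖) (ht x y hx hy) v hv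
    rw [show ‖x - y‖ = ‖y - x‖ from norm_sub_rev x y] at h1 h2
    exact ⟨w, hw, h1, h2⟩
  have hL6Q6 : CondL6 T (LFconj H) → CondQ6 T (LFconj H) := by
    intro h R hR
    obtain ⟨k, hki, hk0, hae⟩ := h R hR
    refine ⟨k, hki, hk0, ?_⟩
    filter_upwards [hae] with t ht
    intro x y hx hy
    refine Thm23.step_L6_to_Q6 H t x y (k t * ‖x - y‖)
      (mul_nonneg (hk0 t) (norm_nonneg _)) ?_
    intro v hv
    have h1 := ht x y hx hy v hv
    rwa [show ‖y - x‖ = ‖x - y‖ from norm_sub_rev y x] at h1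
  have hL6H5 : CondL6 T (LFconj H) → CondH5 T H := by
    intro h R hR
    obtain ⟨k, hki, hk0, hae⟩ := h R hR
    refine ⟨k, hki, hk0, ?_⟩
    filter_upwards [hae, ae_restrict_mem measurableSet_Icc] with t ht htI
    intro x y p hx hy
    have hxy := Thm23.step_L6_to_H5 H t x y p (h2 t htI x) (contH t htI x)
      (k t * ‖y - x‖) (ht x y hx hy)
    have hyx := Thm23.step_L6_to_H5 H t y x p (h2 t htI y) (contH t htI y)
      (k t * ‖x - y‖) (ht y x hy hx)
    rw [show ‖y - x‖ = ‖x - y‖ from norm_sub_rev y x] at hxy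
    have e : k t * ‖x - y‖ * (1 + ‖p‖) = k t * (1 + ‖p‖) * ‖x - y‖ := by ring
    rw [abs_le]
    exact ⟨by linarith, by linarith⟩
  exact ⟨⟨fun h => hQ6L6 (hH5Q6 h), hL6H5⟩, hL6Q6, hQ6L6⟩

end
end
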